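/- arXiv:1506.06537 — 4 statements merged into one kernel-verified Lean document; each statement's English description precedes it below -/
import Mathlib

section
/- In any trace monoid M(Σ,I), the growth series Z_M(t) = Σ_{x∈M} t^{|x|} and the Möbius polynomial μ_M(t) = Σ_{c∈C} (-1)^{|c|} t^{|c|} satisfy Z_M(t)·μ_M(t) = 1 as formal power series. -/
/-!
Expanding the product, the coefficient of `tⁿ` in `Z_M · μ_M` is the signed count of the pairs
`(x, c)` with `c` a clique and `|x| + |c| = n`. The map `(x, c) ↦ (c·x, c)` is a bijection onto
the pairs `(y, c)` with `|y| = n` and `c ⊆ F(y)`, where `F(y)` is the set of letters `a` with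
`y ∈ aM`: by Levi's lemma the letters of `F(y)` pairwise commute, and the cliques dividing `y`
on the left are exactly the subsets of `F(y)`. The inner alternating sum over the subsets of
`F(y)` vanishes unless `F(y) = ∅`, that is `y = 1`.

Cancellativity and Levi's lemma come from the projection lemma: two words represent the same
trace iff their projections onto every pair `{c, d}` of non-commuting (or equal) letters agree.
-/

open FreeMonoid

/-- The congruence on the free monoid over `α` generated by the commutations
`ab = ba` for `(a,b) ∈ I`; the quotient is the trace monoid `M(α, I)`. -/
def traceCon {α : Type*} (I : α → α → Prop) : Con (FreeMonoid α) :=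
  conGen (fun x y => ∃ a b, I a b ∧ x = of a * of b ∧ y = of b * of a)

namespace TraceMonoid

variable {α : Type*} {I : α → α → Prop}

def trace (I : α → α → Prop) (l : List α) : (traceCon I).Quotient :=
  (traceCon I).mk' (ofList l)

@[simp]
theorem trace_nil : trace I [] = 1 := map_one _

theorem trace_append (u v : List α) : trace I (u ++ v) = trace I u * trace I v := by
  rw [trace, ofList_append, map_mul]; rfl

theorem trace_cons (a : α) (u : List α) : trace I (a :: u) = trace I [a] * trace I u :=
  trace_append [a] u

theorem trace_surjective : Function.Surjective (trace I) :=
  (Con.mk'_surjective).comp ofList.surjective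

theorem commute_trace_singleton {a b : α} (h : I a b) : Commute (trace I [a]) (trace I [b]) :=
  (Con.eq _).2 (ConGen.Rel.of _ _ ⟨a, b, h, rfl, rfl⟩)

theorem commute_trace_of_forall_mem {c : α} {l : List α} (h : ∀ d ∈ l, I c d) :
    Commute (trace I [c]) (trace I l) := by
  induction l with
  | nil => exact Commute.one_right _
  | cons d l ih =>
    rw [trace_cons]
    exact (commute_trace_singleton (h d List.mem_cons_self)).mul_right
      (ih fun e he => h e (List.mem_cons_of_mem d he))

theorem filter_eq_of_trace_eq {p : α → Bool} (hp : ∀ a b, I a b → p a → p b → a = b)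
    {u v : List α} (h : trace I u = trace I v) : u.filter p = v.filter p := by
  suffices ∀ x y, traceCon I x y → (toList x).filter p = (toList y).filter p from
    this _ _ ((Con.eq _).1 h)
  intro x y hxy
  induction hxy with
  | of x y hxy =>
    obtain ⟨a, b, hab, rfl, rfl⟩ := hxy
    by_cases ha : p a <;> by_cases hb : p b
    · rw [hp a b hab ha hb]
    all_goals simp [ha, hb]
  | refl => rfl
  | symm _ ih => exact ih.symm
  | trans _ _ ih₁ ih₂ => exact ih₁.trans ih₂
  | mul _ _ ih₁ ih₂ => simp only [toList_mul, List.filter_append, ih₁, ih₂]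

def cliqueProd (s : Finset α) (hs : (s : Set α).Pairwise I) : (traceCon I).Quotient :=
  s.noncommProd (fun a => trace I [a]) (hs.imp fun _ _ => commute_trace_singleton)

section Length

variable {ℓ : (traceCon I).Quotient →* Multiplicative ℕ}
  (hℓ : ∀ a, ℓ (trace I [a]) = Multiplicative.ofAdd 1)
include hℓ

theorem map_trace (l : List α) : ℓ (trace I l) = Multiplicative.ofAdd l.length := by
  induction l with
  | nil => simp
  | cons a l ih => rw [trace_cons, map_mul, hℓ, ih, List.length_cons, add_comm, ofAdd_add]

theorem map_cliqueProd (s : Finset α) (hs : (s : Set α).Pairwise I) :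
    ℓ (cliqueProd s hs) = Multiplicative.ofAdd s.card := by
  refine (Finset.map_noncommProd _ _ _ ℓ).trans
    ((Finset.noncommProd_eq_pow_card _ _ _ _ fun a _ => hℓ a).trans ?_)
  rw [← ofAdd_nsmul, smul_eq_mul, mul_one]

theorem finite_setOf_map_eq [Finite α] (n : ℕ) :
    {x | ℓ x = Multiplicative.ofAdd n}.Finite := by
  refine ((List.finite_length_eq α n).image (trace I)).subset fun x hx => ?_
  obtain ⟨l, rfl⟩ := trace_surjective x
  refine ⟨l, Multiplicative.ofAdd.injective ?_, rfl⟩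
  rw [← map_trace hℓ]
  exact hx

end Length

section FirstLetters

variable [Fintype α]

open Classical in
noncomputable def firstLetters (y : (traceCon I).Quotient) : Finset α :=
  Finset.univ.filter fun a => trace I [a] ∣ y

theorem mem_firstLetters {y : (traceCon I).Quotient} {a : α} :
    a ∈ firstLetters y ↔ trace I [a] ∣ y := by
  simp [firstLetters]

end FirstLetters

variable [DecidableEq α]

theorem eq_nil_of_trace_eq_one {l : List α} (h : trace I l = 1) : l = [] := by
  refine List.eq_nil_iff_forall_not_mem.2 fun a ha => ?_
  have := filter_eq_of_trace_eq (p := (· = a)) (by simp_all) (h.trans trace_nil.symm)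
  have hmem : a ∈ l.filter (· = a) := List.mem_filter.2 ⟨ha, by simp⟩
  simp [this] at hmem

def proj (c d : α) (l : List α) : List α := l.filter fun x => x = c ∨ x = d

theorem proj_eq_of_trace_eq (hsym : ∀ a b, I a b → I b a) {c d : α} (hcd : c = d ∨ ¬ I c d)
    {u v : List α} (h : trace I u = trace I v) : proj c d u = proj c d v := by
  refine filter_eq_of_trace_eq (fun a b hab ha hb => ?_) h
  simp only [decide_eq_true_eq] at ha hb
  rcases hcd with rfl | hcd
  · rcases ha with rfl | rfl <;> rcases hb with rfl | rfl <;> rfl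
  · rcases ha with rfl | rfl <;> rcases hb with rfl | rfl
    exacts [rfl, absurd hab hcd, absurd (hsym _ _ hab) hcd, rfl]

theorem proj_append (c d : α) (u v : List α) : proj c d (u ++ v) = proj c d u ++ proj c d v :=
  List.filter_append _ _

theorem proj_erase (c d a : α) (l : List α) : proj c d (l.erase a) = (proj c d l).erase a :=
  List.erase_filter.symm

theorem trace_eq_cons_erase {c : α} {l : List α} (hc : c ∈ l)
    (h : ∀ d, ¬ I c d → (proj c d l).head? = some c) :
    trace I l = trace I (c :: l.erase c) := by
  obtain ⟨l₁, l₂, hc₁, rfl, he⟩ := List.exists_erase_eq hc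
  have hcomm : ∀ d ∈ l₁, I c d := by
    intro d hd
    by_contra hcd
    have hne : proj c d l₁ ≠ [] := List.ne_nil_of_mem (List.mem_filter.2 ⟨hd, by simp⟩)
    obtain ⟨e, he⟩ := Option.isSome_iff_exists.1 (List.isSome_head?.2 hne)
    have hcl : c ∈ proj c d l₁ := by
      have := h d hcd
      rw [proj_append, List.head?_append_of_ne_nil _ hne] at this
      exact List.mem_of_mem_head? this
    exact hc₁ (List.mem_of_mem_filter hcl)
  rw [he, trace_append, trace_cons c l₂, trace_cons c (l₁ ++ l₂), trace_append, ← mul_assoc,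
    ← mul_assoc, (commute_trace_of_forall_mem hcomm).eq]

theorem trace_eq_of_proj_eq {u v : List α}
    (h : ∀ c d, c = d ∨ ¬ I c d → proj c d u = proj c d v) : trace I u = trace I v := by
  induction u generalizing v with
  | nil =>
    suffices v = [] by rw [this]
    refine List.eq_nil_iff_forall_not_mem.2 fun c hc => ?_
    have := h c c (Or.inl rfl)
    simp only [proj, List.filter_nil, or_self] at this
    exact List.filter_eq_nil_iff.1 this.symm c hc (by simp)
  | cons c u ih =>
    have hhead : ∀ d, c = d ∨ ¬ I c d → proj c d v = c :: proj c d u := fun d hcd => by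
      rw [← h c d hcd]; simp [proj]
    have hcv : c ∈ v := List.mem_of_mem_filter
      (by rw [hhead c (Or.inl rfl)]; exact List.mem_cons_self : c ∈ proj c c v)
    rw [trace_eq_cons_erase hcv fun d hcd => by simp [hhead d (Or.inr hcd)], trace_cons c u,
      trace_cons c (v.erase c), ih fun a b hab => ?_]
    rw [proj_erase, ← h a b hab, ← proj_erase, List.erase_cons_head]

theorem proj_eq_iff_trace_eq (hsym : ∀ a b, I a b → I b a) {u v : List α} :
    (∀ c d, c = d ∨ ¬ I c d → proj c d u = proj c d v) ↔ trace I u = trace I v :=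
  ⟨trace_eq_of_proj_eq, fun h _ _ hcd => proj_eq_of_trace_eq hsym hcd h⟩

theorem isLeftCancelMul (hsym : ∀ a b, I a b → I b a) :
    IsLeftCancelMul (traceCon I).Quotient := by
  refine ⟨fun x y z hyz => ?_⟩
  obtain ⟨u, rfl⟩ := trace_surjective x
  obtain ⟨v, rfl⟩ := trace_surjective y
  obtain ⟨w, rfl⟩ := trace_surjective z
  simp only [← trace_append, ← proj_eq_iff_trace_eq hsym, proj_append,
    List.append_cancel_left_eq] at hyz ⊢
  exact hyz

/-- Levi's lemma for first letters. -/
theorem rel_and_exists_of_singleton_mul_eq (hsym : ∀ a b, I a b → I b a) {a b : α} (hab : a ≠ b)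
    {x y : (traceCon I).Quotient} (h : trace I [a] * x = trace I [b] * y) :
    I a b ∧ ∃ w, x = trace I [b] * w ∧ y = trace I [a] * w := by
  obtain ⟨u, rfl⟩ := trace_surjective x
  obtain ⟨v, rfl⟩ := trace_surjective y
  rw [← trace_cons, ← trace_cons] at h
  have hproj {c d : α} (hcd : c = d ∨ ¬ I c d) := proj_eq_of_trace_eq hsym hcd h
  have hI : I a b := by
    by_contra hn
    simpa [proj, hab] using hproj (Or.inr hn)
  have hbu : b ∈ u := by
    have := hproj (Or.inl (rfl : b = b))
    simp only [proj, or_self, List.filter_cons, decide_eq_true_eq, hab, if_false, if_true] at this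
    exact List.mem_of_mem_filter (this ▸ List.mem_cons_self)
  have hu := trace_eq_cons_erase hbu fun d hd => by
    have had : a ≠ d := by rintro rfl; exact hd (hsym _ _ hI)
    have := hproj (Or.inr hd)
    simp only [proj, List.filter_cons, decide_eq_true_eq, hab, had, or_self, if_false,
      true_or, if_true] at this
    rw [proj, this, List.head?_cons]
  refine ⟨hI, trace I (u.erase b), by rw [hu, trace_cons], ?_⟩
  have := isLeftCancelMul hsym
  apply mul_left_cancel (a := trace I [b])
  rw [← trace_cons, ← h, trace_cons, hu, trace_cons b, ← mul_assoc, ← mul_assoc,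
    (commute_trace_singleton hI).eq]

theorem singleton_dvd_cliqueProd {s : Finset α} (hs : (s : Set α).Pairwise I) {a : α}
    (ha : a ∈ s) : trace I [a] ∣ cliqueProd s hs :=
  ⟨_, (s.mul_noncommProd_erase ha _ _).symm⟩

theorem cliqueProd_insert {s : Finset α} {a : α} (ha : a ∉ s)
    (hs : ((insert a s : Finset α) : Set α).Pairwise I) :
    cliqueProd (insert a s) hs = trace I [a] * cliqueProd s (hs.mono (by simp)) :=
  s.noncommProd_insert_of_notMem a _ _ ha

theorem singleton_dvd_of_dvd_cliqueProd_mul (hsym : ∀ a b, I a b → I b a) {s : Finset α}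
    (hs : (s : Set α).Pairwise I) {a : α} (ha : a ∉ s) {x : (traceCon I).Quotient}
    (h : trace I [a] ∣ cliqueProd s hs * x) : trace I [a] ∣ x := by
  induction s using Finset.induction_on generalizing x with
  | empty => simpa [cliqueProd] using h
  | insert b t hbt ih =>
    obtain ⟨u, hu⟩ := h
    rw [cliqueProd_insert hbt, mul_assoc] at hu
    have hab : a ≠ b := fun hab => ha (hab ▸ Finset.mem_insert_self a t)
    obtain ⟨w, -, hw⟩ := (rel_and_exists_of_singleton_mul_eq hsym hab hu.symm).2
    exact ih _ (fun hat => ha (Finset.mem_insert_of_mem hat)) ⟨w, hw⟩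

section FirstLetters

variable [Fintype α]

theorem pairwise_firstLetters (hsym : ∀ a b, I a b → I b a) (y : (traceCon I).Quotient) :
    (firstLetters y : Set α).Pairwise I := by
  intro a ha b hb hab
  obtain ⟨x, hx⟩ := mem_firstLetters.1 ha
  obtain ⟨z, hz⟩ := mem_firstLetters.1 hb
  exact (rel_and_exists_of_singleton_mul_eq hsym hab (hx.symm.trans hz)).1

theorem firstLetters_eq_empty_iff {y : (traceCon I).Quotient} : firstLetters y = ∅ ↔ y = 1 := by
  obtain ⟨l, rfl⟩ := trace_surjective y
  constructor
  · intro h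
    cases l with
    | nil => rfl
    | cons a l =>
      have := mem_firstLetters.2 ⟨trace I l, trace_cons a l⟩
      simp [h] at this
  · intro h
    refine Finset.eq_empty_iff_forall_notMem.2 fun a ha => ?_
    obtain ⟨x, hx⟩ := mem_firstLetters.1 ha
    obtain ⟨u, rfl⟩ := trace_surjective x
    rw [h, ← trace_cons] at hx
    exact List.cons_ne_nil _ _ (eq_nil_of_trace_eq_one hx.symm)

theorem cliqueProd_dvd_iff (hsym : ∀ a b, I a b → I b a) {s : Finset α}
    (hs : (s : Set α).Pairwise I) {y : (traceCon I).Quotient} :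
    cliqueProd s hs ∣ y ↔ s ⊆ firstLetters y := by
  refine ⟨fun h a ha => mem_firstLetters.2 ((singleton_dvd_cliqueProd hs ha).trans h), ?_⟩
  induction s using Finset.induction_on with
  | empty => simp [cliqueProd]
  | insert a t hat ih =>
    intro hsub
    obtain ⟨x, rfl⟩ := ih (hs.mono (by simp)) ((Finset.subset_insert a t).trans hsub)
    obtain ⟨x', rfl⟩ := singleton_dvd_of_dvd_cliqueProd_mul hsym _ hat
      (mem_firstLetters.1 (hsub (Finset.mem_insert_self a t)))
    have hcomm : Commute (trace I [a]) (cliqueProd t (hs.mono (by simp))) :=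
      Finset.noncommProd_commute _ _ _ _ fun b hb => commute_trace_singleton
        (hs (Finset.mem_insert_self a t) (Finset.mem_insert_of_mem hb)
          fun hab => hat (hab ▸ hb))
    exact ⟨x', by rw [cliqueProd_insert hat, ← mul_assoc, hcomm.eq]⟩

end FirstLetters

def cliquesOfCard (I : α → α → Prop) [Fintype α] [DecidableRel I] (q : ℕ) : Finset (Finset α) :=
  Finset.univ.filter fun s => s.card = q ∧ ∀ i ∈ s, ∀ j ∈ s, i ≠ j → I i j

theorem mem_cliquesOfCard [Fintype α] [DecidableRel I] {q : ℕ} {s : Finset α} :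
    s ∈ cliquesOfCard I q ↔ s.card = q ∧ (s : Set α).Pairwise I := by
  simp only [cliquesOfCard, Finset.mem_filter, Finset.mem_univ, true_and]
  rfl

open Finset in
theorem sum_antidiagonal_sum_product_eq_sum_sum_powerset [Fintype α] [DecidableRel I]
    (hsym : ∀ a b, I a b → I b a) {ℓ : (traceCon I).Quotient →* Multiplicative ℕ}
    (hℓ : ∀ a, ℓ (trace I [a]) = Multiplicative.ofAdd 1)
    {M : Type*} [AddCommMonoid M] (f : Finset α → M) (n : ℕ) :
    ∑ p ∈ antidiagonal n, ∑ z ∈ (finite_setOf_map_eq hℓ p.1).toFinset ×ˢ cliquesOfCard I p.2,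
        f z.2 =
      ∑ y ∈ (finite_setOf_map_eq hℓ n).toFinset, ∑ s ∈ (firstLetters y).powerset, f s := by
  rw [sum_sigma', sum_sigma']
  have mem_source {p q : ℕ} {x : (traceCon I).Quotient} {s : Finset α} :
      ⟨(p, q), x, s⟩ ∈ (antidiagonal n).sigma
          (fun p => (finite_setOf_map_eq hℓ p.1).toFinset ×ˢ cliquesOfCard I p.2) ↔
        p + q = n ∧ ℓ x = Multiplicative.ofAdd p ∧ s.card = q ∧ (s : Set α).Pairwise I := by
    simp only [mem_sigma, mem_product, mem_cliquesOfCard, Set.Finite.mem_toFinset,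
      Set.mem_ofPred_eq, HasAntidiagonal.mem_antidiagonal]
  have mem_target {y : (traceCon I).Quotient} {s : Finset α} :
      ⟨y, s⟩ ∈ (finite_setOf_map_eq hℓ n).toFinset.sigma (fun y => (firstLetters y).powerset) ↔
        ℓ y = Multiplicative.ofAdd n ∧ s ⊆ firstLetters y := by
    simp only [mem_sigma, Set.Finite.mem_toFinset, Set.mem_ofPred_eq, mem_powerset]
  refine sum_bij (fun z hz => ⟨cliqueProd z.2.2 (mem_source.1 hz).2.2.2 * z.2.1, z.2.2⟩)
    ?_ ?_ ?_ fun _ _ => rfl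
  · rintro ⟨⟨p, q⟩, x, s⟩ hz
    obtain ⟨hpq, hx, rfl, hs⟩ := mem_source.1 hz
    refine mem_target.2 ⟨?_, (cliqueProd_dvd_iff hsym hs).1 (dvd_mul_right _ _)⟩
    rw [map_mul, map_cliqueProd hℓ, hx, ← ofAdd_add, ← hpq, add_comm]
  · rintro ⟨⟨p, q⟩, x, s⟩ hz ⟨⟨p', q'⟩, x', s'⟩ hz' h
    obtain ⟨hpq, hx, rfl, hs⟩ := mem_source.1 hz
    obtain ⟨hpq', hx', rfl, -⟩ := mem_source.1 hz'
    obtain ⟨hy, rfl⟩ : _ ∧ s = s' := by simpa only [Sigma.mk.injEq, heq_iff_eq] using h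
    have := isLeftCancelMul hsym
    obtain rfl := mul_left_cancel hy
    obtain rfl : p = p' := Multiplicative.ofAdd.injective (hx.symm.trans hx')
    rfl
  · rintro ⟨y, s⟩ hz
    obtain ⟨hy, hsub⟩ := mem_target.1 hz
    have hs := (pairwise_firstLetters hsym y).mono (coe_subset.2 hsub)
    obtain ⟨x, rfl⟩ := (cliqueProd_dvd_iff hsym hs).2 hsub
    obtain ⟨m, hm⟩ : ∃ m, ℓ x = Multiplicative.ofAdd m := ⟨_, (ofAdd_toAdd _).symm⟩
    rw [map_mul, map_cliqueProd hℓ, hm, ← ofAdd_add] at hy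
    refine ⟨⟨(m, s.card), x, s⟩, mem_source.2 ⟨?_, hm, rfl, hs⟩, rfl⟩
    rw [add_comm]
    exact Multiplicative.ofAdd.injective hy

end TraceMonoid

theorem growth_series_mul_mobius_eq_one_general
    {α : Type*} [Fintype α] [DecidableEq α]
    (I : α → α → Prop) [DecidableRel I]
    (hsym : ∀ a b, I a b → I b a)
    (ℓ : (traceCon I).Quotient →* Multiplicative ℕ)
    (hℓ : ∀ a : α, ℓ ((traceCon I).mk' (of a)) = Multiplicative.ofAdd 1) :
    (PowerSeries.mk fun n =>
        (Nat.card {x : (traceCon I).Quotient // ℓ x = Multiplicative.ofAdd n} : ℝ)) *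
      (PowerSeries.mk fun n =>
        (-1 : ℝ) ^ n * ((Finset.univ.filter fun s : Finset α =>
            s.card = n ∧ ∀ i ∈ s, ∀ j ∈ s, i ≠ j → I i j).card)) = 1 := by
  classical
  have hℓ' : ∀ a, ℓ (TraceMonoid.trace I [a]) = Multiplicative.ofAdd 1 := hℓ
  ext n
  rw [PowerSeries.coeff_mul, PowerSeries.coeff_one]
  simp only [PowerSeries.coeff_mk]
  open Finset TraceMonoid in
  calc _ = ∑ p ∈ antidiagonal n,
          ∑ z ∈ (finite_setOf_map_eq hℓ' p.1).toFinset ×ˢ cliquesOfCard I p.2,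
            (-1 : ℝ) ^ z.2.card :=
        sum_congr rfl fun p _ => by
          rw [sum_congr rfl fun z hz => by rw [(mem_cliquesOfCard.1 (mem_product.1 hz).2).1],
            sum_const, card_product, ← Set.coe_ofPred,
            Nat.card_eq_card_finite_toFinset (finite_setOf_map_eq hℓ' p.1), nsmul_eq_mul]
          unfold cliquesOfCard
          push_cast
          ring
    _ = ∑ y ∈ (finite_setOf_map_eq hℓ' n).toFinset, ∑ s ∈ (firstLetters y).powerset,
          (-1 : ℝ) ^ s.card :=
        sum_antidiagonal_sum_product_eq_sum_sum_powerset hsym hℓ' (fun s => (-1 : ℝ) ^ s.card) n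
    _ = ∑ y ∈ (finite_setOf_map_eq hℓ' n).toFinset, if firstLetters y = ∅ then 1 else 0 :=
        sum_congr rfl fun y _ => by exact_mod_cast sum_powerset_neg_one_pow_card
    _ = if n = 0 then 1 else 0 := by
        simp only [firstLetters_eq_empty_iff, sum_ite_eq', Set.Finite.mem_toFinset,
          Set.mem_ofPred_eq, map_one]
        simp [← ofAdd_zero, eq_comm]

/-- In any trace monoid `M(Σ,I)`, the growth series
`Z_M(t) = Σ_{x∈M} t^{|x|}` and the Möbius polynomial
`μ_M(t) = Σ_{c∈C} (-1)^{|c|} t^{|c|}` satisfy `Z_M(t)·μ_M(t) = 1` as formal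
power series.  The length is encoded by the monoid morphism `ℓ` sending each
generator to `1`; the coefficient of `Z_M` at `n` is the (finite) number of
traces of length `n`, and the coefficient of `μ_M` at `n` is `(-1)^n` times the
number of cliques of cardinality `n`. -/
theorem growth_series_mul_mobius_eq_one
    {α : Type*} [Fintype α] [DecidableEq α]
    (I : α → α → Prop) [DecidableRel I]
    (hirr : ∀ a, ¬ I a a) (hsym : ∀ a b, I a b → I b a)
    (ℓ : (traceCon I).Quotient →* Multiplicative ℕ)
    (hℓ : ∀ a : α, ℓ ((traceCon I).mk' (of a)) = Multiplicative.ofAdd 1)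
    (hfin : ∀ n : ℕ, {x : (traceCon I).Quotient | ℓ x = Multiplicative.ofAdd n}.Finite) :
    (PowerSeries.mk fun n =>
        (Nat.card {x : (traceCon I).Quotient // ℓ x = Multiplicative.ofAdd n} : ℝ)) *
      (PowerSeries.mk fun n =>
        (-1 : ℝ) ^ n * ((Finset.univ.filter fun s : Finset α =>
            s.card = n ∧ ∀ i ∈ s, ∀ j ∈ s, i ≠ j → I i j).card)) = 1 :=
  growth_series_mul_mobius_eq_one_general I hsym ℓ hℓ
end

section
/- Let t_0,...,t_N be positive reals such that for every i ∈ {-1,0,...,N-2} the quantity μ_{0,i} (defined by μ_{0,-1}=1, μ_{0,0}=1-t_0, μ_{0,i+1}=μ_{0,i}-t_{i+1}μ_{0,i-1}) is positive, and such that μ_{0,N} = 0. Define p_1(a_0)=t_0, p_1(a_1)=1-t_0, p_i(a_{i-1}) = t_{i-1}·μ_{0,i-3}/μ_{0,i-2} and p_i(a_i) = μ_{0,i-1}/μ_{0,i-2} for 1 < i < N, and p_N(a_{N-1}) = 1-t_N, p_N(a_N) = t_N. Then for every i with 1 ≤ i ≤ N-1, p_i(a_{i-1}) + p_i(a_i)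 = 1, and p_i(a_i)·p_{i+1}(a_i) = t_i for all 0 < i < N. -/
/-- `pathMu t (i+1)` is the quantity `μ_{0,i}` of the paper (index shifted by
one so that `pathMu t 0 = μ_{0,-1} = 1`). -/
def pathMu (t : ℕ → ℝ) : ℕ → ℝ
  | 0 => 1
  | 1 => 1 - t 0
  | (n + 2) => pathMu t (n + 1) - t (n + 1) * pathMu t n

/-- `p_i(a_{i-1})` for `1 ≤ i ≤ N`:  `p_1(a_0) = t_0`,
`p_i(a_{i-1}) = t_{i-1} μ_{0,i-3}/μ_{0,i-2}` for `1 < i < N`, and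
`p_N(a_{N-1}) = 1 - t_N`.  (Recall `μ_{0,k} = pathMu t (k+1)`.) -/
noncomputable def pLeft (t : ℕ → ℝ) (N i : ℕ) : ℝ :=
  if i = 1 then t 0
  else if i = N then 1 - t N
  else t (i - 1) * pathMu t (i - 2) / pathMu t (i - 1)

/-- `p_i(a_i)` for `1 ≤ i ≤ N`:  `p_1(a_1) = 1 - t_0`,
`p_i(a_i) = μ_{0,i-1}/μ_{0,i-2}` for `1 < i < N`, and `p_N(a_N) = t_N`. -/
noncomputable def pRight (t : ℕ → ℝ) (N i : ℕ) : ℝ :=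
  if i = 1 then 1 - t 0
  else if i = N then t N
  else pathMu t i / pathMu t (i - 1)

/-!
The boundary values `p_1` and `p_N` are the interior formulas
`p_{n+1}(a_n) = t_n μ_{0,n-2}/μ_{0,n-1}` and `p_{n+1}(a_{n+1}) = μ_{0,n}/μ_{0,n-1}` in disguise:
at `n = 0` because `μ_{0,-1} = 1`, and at `n + 1 = N` because `μ_{0,N} = 0` says
`μ_{0,N-1} = t_N μ_{0,N-2}`, which with the recurrence gives `(1 - t_N) μ_{0,N-2} = t_{N-1} μ_{0,N-3}`. Once both are written as ratios of consecutive `μ`'s,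
the sum is `1` by the defining recurrence and the product telescopes to `t_i`.
-/

section PathModel

variable {t : ℕ → ℝ} {N n : ℕ}

/-- At `n = 0` the truncated `n - 1` reads `μ_{0,-2}` as `μ_{0,-1} = 1`, which is what makes
the identity hold there too. -/
theorem pathMu_succ_add_mul_pathMu_pred (t : ℕ → ℝ) (n : ℕ) :
    pathMu t (n + 1) + t n * pathMu t (n - 1) = pathMu t n := by
  cases n with
  | zero => simp [pathMu]
  | succ m => simp only [pathMu, add_tsub_cancel_right]; ring

theorem pathMu_succ_eq_of_pathMu_add_two_eq_zero (h : pathMu t (n + 2) = 0) :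
    pathMu t (n + 1) = t (n + 1) * pathMu t n := by
  simp only [pathMu] at h
  linarith

theorem pRight_succ (hμ : pathMu t n ≠ 0) (hzero : pathMu t (N + 1) = 0) :
    pRight t N (n + 1) = pathMu t (n + 1) / pathMu t n := by
  unfold pRight
  split_ifs with h1 hN
  · obtain rfl : n = 0 := by omega
    simp [pathMu]
  · subst hN
    rw [pathMu_succ_eq_of_pathMu_add_two_eq_zero hzero, mul_div_cancel_right₀ _ hμ]
  · rfl

theorem pLeft_succ (hμ : pathMu t n ≠ 0) (hzero : pathMu t (N + 1) = 0) :
    pLeft t N (n + 1) = t n * pathMu t (n - 1) / pathMu t n := by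
  unfold pLeft
  split_ifs with h1 hN
  · obtain rfl : n = 0 := by omega
    simp [pathMu]
  · subst hN
    have hrec := pathMu_succ_add_mul_pathMu_pred t n
    rw [pathMu_succ_eq_of_pathMu_add_two_eq_zero hzero] at hrec
    rw [eq_div_iff hμ]
    linarith
  · rw [add_tsub_cancel_right, show n + 1 - 2 = n - 1 by omega]

theorem pLeft_add_pRight (hμ : pathMu t n ≠ 0) (hzero : pathMu t (N + 1) = 0) :
    pLeft t N (n + 1) + pRight t N (n + 1) = 1 := by
  rw [pLeft_succ hμ hzero, pRight_succ hμ hzero, ← add_div, add_comm,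
    pathMu_succ_add_mul_pathMu_pred, div_self hμ]

theorem pRight_mul_pLeft_succ (hμ : pathMu t n ≠ 0) (hμ' : pathMu t (n + 1) ≠ 0)
    (hzero : pathMu t (N + 1) = 0) :
    pRight t N (n + 1) * pLeft t N (n + 2) = t (n + 1) := by
  rw [pRight_succ hμ hzero, pLeft_succ hμ' hzero, add_tsub_cancel_right]
  field_simp

end PathModel

theorem path_model_local_distributions_general (N : ℕ) (t : ℕ → ℝ)
    (hmu_pos : ∀ i ≤ N - 1, 0 < pathMu t i)
    (hmu_zero : pathMu t (N + 1) = 0) :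
    (∀ i, 1 ≤ i → i ≤ N - 1 → pLeft t N i + pRight t N i = 1) ∧
    (∀ i, 0 < i → i < N → pRight t N i * pLeft t N (i + 1) = t i) := by
  constructor
  · intro i hi hiN
    obtain ⟨n, rfl⟩ := Nat.exists_eq_add_of_le' hi
    exact pLeft_add_pRight (hmu_pos n (by omega)).ne' hmu_zero
  · intro i hi hiN
    obtain ⟨n, rfl⟩ := Nat.exists_eq_add_of_le' hi
    exact pRight_mul_pLeft_succ (hmu_pos n (by omega)).ne' (hmu_pos (n + 1) (by omega)).ne'
      hmu_zero

/-- with `t_0,...,t_N` positive, `μ_{0,i} > 0` for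
`-1 ≤ i ≤ N-2`, and `μ_{0,N} = 0`, the local distributions of the path model
satisfy `p_i(a_{i-1}) + p_i(a_i) = 1` for `1 ≤ i ≤ N-1` and
`p_i(a_i)·p_{i+1}(a_i) = t_i` for `0 < i < N`. -/
theorem path_model_local_distributions (N : ℕ) (hN : 2 ≤ N) (t : ℕ → ℝ)
    (hpos : ∀ i ≤ N, 0 < t i)
    (hmu_pos : ∀ i ≤ N - 1, 0 < pathMu t i)
    (hmu_zero : pathMu t (N + 1) = 0) :
    (∀ i, 1 ≤ i → i ≤ N - 1 → pLeft t N i + pRight t N i = 1) ∧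
    (∀ i, 0 < i → i < N → pRight t N i * pLeft t N (i + 1) = t i) :=
  path_model_local_distributions_general N t hmu_pos hmu_zero
end

section
/- Let f: M → ℝ_{>0} be a monoid morphism from a trace monoid M(Σ,I) to the multiplicative positive reals, and let h(e) = Σ_{c∈C} (-1)^{|c|} f(c) be its Möbius transform at the empty clique. If the series Σ_{x∈M} f(x) converges to a sum S, then S·h(e) = 1; in particular h(e) > 0. -/
open FreeMonoid

/-! Two words are equivalent iff their projections onto every pair of dependent letters agree.
This makes the trace monoid left cancellative, and shows that two distinct minimal letters of a
trace `z` (letters `a` with `a ∣ z`) commute. Hence a clique product divides `z` exactly when the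
clique is a subset of the minimal letters of `z`, and `∑_{c ∣ z} (-1)^{|c|}` vanishes unless
`z = 1`. Expanding `S · h(e) = ∑_c (-1)^{|c|} ∑_x f(c x)` and regrouping by `z = c x` (using left
cancellation) leaves `f 1 = 1`. Finally `S ≥ f 1 = 1 > 0` forces `h(e) > 0`. -/

theorem FreeMonoid.eq_of_of_dvd_of_mul {α : Type*} {a x : α} {w : FreeMonoid α}
    (h : of a ∣ of x * w) : a = x := by
  obtain ⟨c, hc⟩ := h
  exact (List.cons_eq_cons.mp (congrArg toList hc)).1.symm

theorem FreeMonoid.not_of_dvd_one {α : Type*} (a : α) : ¬ of a ∣ (1 : FreeMonoid α) := by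
  rintro ⟨c, hc⟩
  exact List.cons_ne_nil _ _ (congrArg toList hc).symm

section TraceMonoid

variable {α : Type*} {I : α → α → Prop}

abbrev letter (I : α → α → Prop) (a : α) : (traceCon I).Quotient := (traceCon I).mk' (of a)

theorem traceCon_of_mul_of {a b : α} (h : I a b) : traceCon I (of a * of b) (of b * of a) :=
  ConGen.Rel.of _ _ ⟨a, b, h, rfl, rfl⟩

theorem commute_letter {a b : α} (h : I a b) : Commute (letter I a) (letter I b) := by
  show _ * _ = _ * _
  rw [← map_mul, ← map_mul]
  exact (Con.eq _).mpr (traceCon_of_mul_of h)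

theorem exists_letter_dvd_of_ne_one {z : (traceCon I).Quotient} (hz : z ≠ 1) :
    ∃ a, letter I a ∣ z := by
  obtain ⟨w, rfl⟩ := (traceCon I).mk'_surjective z
  induction w using FreeMonoid.inductionOn' with
  | one => exact absurd (map_one _) hz
  | of_mul a t _ => exact ⟨a, _, map_mul _ _ _⟩

variable [DecidableEq α]

def pairProj (a b : α) : FreeMonoid α →* FreeMonoid α :=
  lift fun c => if c = a ∨ c = b then of c else 1

theorem pairProj_of_of_mem {a b c : α} (h : c = a ∨ c = b) : pairProj a b (of c) = of c := by
  simp [pairProj, h]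

theorem pairProj_of_of_notMem {a b c : α} (h : ¬ (c = a ∨ c = b)) :
    pairProj a b (of c) = 1 := by
  simp [pairProj, h]

theorem pairProj_comm (a b : α) : pairProj a b = pairProj b a := by
  simp only [pairProj, or_comm]

theorem pairProj_of_mul_self_left (a b : α) (w : FreeMonoid α) :
    pairProj a b (of a * w) = of a * pairProj a b w := by
  rw [map_mul, pairProj_of_of_mem (.inl rfl)]

theorem traceCon_le_ker_pairProj (hsym : ∀ a b, I a b → I b a) {a b : α}
    (hab : a = b ∨ ¬ I a b) : traceCon I ≤ Con.ker (pairProj a b) := by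
  refine Con.conGen_le.mpr ?_
  rintro _ _ ⟨x, y, hxy, rfl, rfl⟩
  rw [Con.ker_rel, map_mul, map_mul]
  by_cases hx : x = a ∨ x = b
  · by_cases hy : y = a ∨ y = b
    · obtain rfl | hne := eq_or_ne x y
      · rfl
      · exfalso
        rcases hx with rfl | rfl <;> rcases hy with rfl | rfl <;> grind
    · rw [pairProj_of_of_notMem hy, one_mul, mul_one]
  · rw [pairProj_of_of_notMem hx, one_mul, mul_one]

theorem letter_dvd_mk'_iff (hsym : ∀ a b, I a b → I b a) {a : α} {w : FreeMonoid α} :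
    letter I a ∣ (traceCon I).mk' w ↔ ∀ b, (a = b ∨ ¬ I a b) → of a ∣ pairProj a b w := by
  refine ⟨fun ⟨m, hm⟩ b hab => ?_, fun hw => ?_⟩
  · obtain ⟨u, rfl⟩ := (traceCon I).mk'_surjective m
    rw [← map_mul] at hm
    exact ⟨pairProj a b u, by
      rw [traceCon_le_ker_pairProj hsym hab ((Con.eq _).mp hm), pairProj_of_mul_self_left]⟩
  induction w using FreeMonoid.inductionOn' with
  | one => exact absurd (hw a (.inl rfl)) (not_of_dvd_one a)
  | of_mul x t ih =>
    obtain rfl | hxa := eq_or_ne x a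
    · exact ⟨_, map_mul _ _ _⟩
    have hax : I a x := by
      by_contra hax
      have hdvd := hw x (.inr hax)
      rw [map_mul, pairProj_of_of_mem (.inr rfl)] at hdvd
      exact hxa (eq_of_of_dvd_of_mul hdvd).symm
    obtain ⟨m, hm⟩ := ih fun b hab => by
      have hx : ¬ (x = a ∨ x = b) := by
        rintro (rfl | rfl)
        exacts [hxa rfl, hab.elim (fun h => hxa h.symm) (· hax)]
      simpa only [map_mul, pairProj_of_of_notMem hx, one_mul] using hw b hab
    refine ⟨letter I x * m, ?_⟩
    rw [map_mul, hm, ← mul_assoc, ← mul_assoc, (commute_letter hax).eq]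

theorem traceCon_iff_forall_pairProj_eq (hsym : ∀ a b, I a b → I b a) {u v : FreeMonoid α} :
    traceCon I u v ↔ ∀ a b, (a = b ∨ ¬ I a b) → pairProj a b u = pairProj a b v := by
  refine ⟨fun h a b hab => traceCon_le_ker_pairProj hsym hab h, fun H => ?_⟩
  induction u using FreeMonoid.inductionOn' generalizing v with
  | one =>
    induction v using FreeMonoid.inductionOn' with
    | one => exact (traceCon I).refl 1
    | of_mul x t _ =>
      refine absurd ⟨pairProj x x t, ?_⟩ (not_of_dvd_one x)
      rw [← pairProj_of_mul_self_left, ← H x x (.inl rfl), map_one]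
  | of_mul a t ih =>
    obtain ⟨m, hm⟩ := (letter_dvd_mk'_iff hsym (w := v)).mpr
      fun b hab => ⟨pairProj a b t, by rw [← H a b hab, pairProj_of_mul_self_left]⟩
    obtain ⟨v', rfl⟩ := (traceCon I).mk'_surjective m
    rw [← map_mul] at hm
    have hv := (Con.eq _).mp hm
    refine (traceCon I).trans ((traceCon I).mul ((traceCon I).refl _) ?_) hv.symm
    refine ih fun b c hbc => mul_left_cancel (a := pairProj b c (of a)) ?_
    rw [← map_mul, ← map_mul, H b c hbc, traceCon_le_ker_pairProj hsym hbc hv]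

theorem isLeftCancelMul_traceCon (hsym : ∀ a b, I a b → I b a) :
    IsLeftCancelMul (traceCon I).Quotient := by
  refine ⟨fun g x y h => ?_⟩
  obtain ⟨g, rfl⟩ := (traceCon I).mk'_surjective g
  obtain ⟨x, rfl⟩ := (traceCon I).mk'_surjective x
  obtain ⟨y, rfl⟩ := (traceCon I).mk'_surjective y
  simp only [← map_mul] at h
  have hgxy := (traceCon_iff_forall_pairProj_eq hsym).mp ((Con.eq _).mp h)
  refine (Con.eq _).mpr ((traceCon_iff_forall_pairProj_eq hsym).mpr fun a b hab => ?_)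
  exact mul_left_cancel (by simpa only [map_mul] using hgxy a b hab)

theorem rel_of_letter_dvd_of_letter_dvd (hsym : ∀ a b, I a b → I b a) {a b : α}
    {z : (traceCon I).Quotient} (hab : a ≠ b) (ha : letter I a ∣ z) (hb : letter I b ∣ z) :
    I a b := by
  obtain ⟨w, rfl⟩ := (traceCon I).mk'_surjective z
  by_contra hnab
  obtain ⟨p, hp⟩ := (letter_dvd_mk'_iff hsym).mp ha b (.inr hnab)
  have hba := (letter_dvd_mk'_iff hsym).mp hb a (.inr fun h => hnab (hsym b a h))
  rw [pairProj_comm, hp] at hba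
  exact hab (eq_of_of_dvd_of_mul hba).symm

theorem letter_dvd_of_letter_dvd_letter_mul (hsym : ∀ a b, I a b → I b a) {a b : α}
    {x : (traceCon I).Quotient} (hab : a ≠ b) (h : letter I b ∣ letter I a * x) :
    letter I b ∣ x := by
  have hIab := rel_of_letter_dvd_of_letter_dvd hsym hab (dvd_mul_right _ x) h
  obtain ⟨u, rfl⟩ := (traceCon I).mk'_surjective x
  rw [← map_mul, letter_dvd_mk'_iff hsym] at h
  refine (letter_dvd_mk'_iff hsym).mpr fun c hbc => ?_
  have hac : ¬ (a = b ∨ a = c) := by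
    rintro (rfl | rfl)
    exacts [hab rfl, hbc.elim (fun h => hab h.symm) (· (hsym _ _ hIab))]
  simpa only [map_mul, pairProj_of_of_notMem hac, one_mul] using h c hbc

theorem not_letter_dvd_one (hsym : ∀ a b, I a b → I b a) (a : α) : ¬ letter I a ∣ 1 := fun h =>
  not_of_dvd_one a (by simpa using (letter_dvd_mk'_iff hsym).mp h a (.inl rfl))

end TraceMonoid

section Cliques

variable {α : Type*} {I : α → α → Prop}

/-- The order of `s.toList` is arbitrary; for a clique `s` it does not matter
(`cliqueProd_insert`). -/
noncomputable def cliqueProd (I : α → α → Prop) (s : Finset α) : (traceCon I).Quotient :=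
  (s.toList.map (letter I)).prod

theorem map_cliqueProd {M : Type*} [CommMonoid M] (f : (traceCon I).Quotient →* M)
    (s : Finset α) : f (cliqueProd I s) = ∏ a ∈ s, f (letter I a) := by
  rw [cliqueProd, map_list_prod, List.map_map, Finset.prod_map_toList]
  rfl

variable [DecidableEq α]

theorem cliqueProd_insert {a : α} {s : Finset α} (ha : a ∉ s)
    (hs : (↑(insert a s) : Set α).Pairwise I) :
    cliqueProd I (insert a s) = letter I a * cliqueProd I s := by
  refine ((Finset.toList_insert ha).map (letter I)).prod_eq' (List.pairwise_map.mpr ?_)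
  exact (Finset.nodup_toList _).pairwise_of_forall_ne fun x hx y hy hxy =>
    commute_letter (hs (Finset.mem_toList.mp hx) (Finset.mem_toList.mp hy) hxy)

theorem letter_dvd_cliqueProd {a : α} {s : Finset α} (hs : (s : Set α).Pairwise I)
    (ha : a ∈ s) : letter I a ∣ cliqueProd I s := by
  rw [← Finset.insert_erase ha] at hs ⊢
  rw [cliqueProd_insert (Finset.notMem_erase a s) hs]
  exact dvd_mul_right _ _

theorem cliqueProd_dvd_iff (hsym : ∀ a b, I a b → I b a) {s : Finset α}
    (hs : (s : Set α).Pairwise I) {z : (traceCon I).Quotient} :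
    cliqueProd I s ∣ z ↔ ∀ a ∈ s, letter I a ∣ z := by
  refine ⟨fun h a ha => (letter_dvd_cliqueProd hs ha).trans h, fun h => ?_⟩
  induction s using Finset.induction_on generalizing z with
  | empty => simp [cliqueProd]
  | insert a s ha ih =>
    rw [Finset.forall_mem_insert] at h
    obtain ⟨⟨z, rfl⟩, h⟩ := h
    rw [cliqueProd_insert ha hs]
    exact mul_dvd_mul_left _ (ih (hs.mono (by simp)) fun b hb =>
      letter_dvd_of_letter_dvd_letter_mul hsym (ne_of_mem_of_not_mem hb ha).symm (h b hb))

theorem pairwise_of_forall_letter_dvd (hsym : ∀ a b, I a b → I b a) {s : Finset α}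
    {z : (traceCon I).Quotient} (h : ∀ a ∈ s, letter I a ∣ z) : (s : Set α).Pairwise I :=
  fun a ha b hb hab => rel_of_letter_dvd_of_letter_dvd hsym hab (h a ha) (h b hb)

variable [Fintype α]

open Classical in
theorem filter_letter_dvd_eq_empty_iff (hsym : ∀ a b, I a b → I b a)
    (z : (traceCon I).Quotient) : Finset.univ.filter (letter I · ∣ z) = ∅ ↔ z = 1 := by
  simp only [Finset.filter_eq_empty_iff, Finset.mem_univ, true_implies]
  refine ⟨fun h => by_contra fun hz => ?_, fun hz => hz ▸ not_letter_dvd_one hsym⟩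
  obtain ⟨a, ha⟩ := exists_letter_dvd_of_ne_one hz
  exact h ha

variable [DecidableRel I]

open Classical in
theorem filter_cliques_cliqueProd_dvd (hsym : ∀ a b, I a b → I b a)
    (z : (traceCon I).Quotient) :
    (Finset.univ.filter fun s : Finset α => ∀ i ∈ s, ∀ j ∈ s, i ≠ j → I i j).filter
      (cliqueProd I · ∣ z) = (Finset.univ.filter (letter I · ∣ z)).powerset := by
  ext s
  simp only [Finset.mem_filter, Finset.mem_univ, true_and, Finset.mem_powerset,
    Finset.subset_iff]
  constructor
  · rintro ⟨hs, h⟩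
    exact (cliqueProd_dvd_iff hsym hs).mp h
  · intro h
    have hs := pairwise_of_forall_letter_dvd hsym h
    exact ⟨hs, (cliqueProd_dvd_iff hsym hs).mpr h⟩

open Classical in
theorem sum_neg_one_pow_card_cliques_cliqueProd_dvd {R : Type*} [Ring R]
    (hsym : ∀ a b, I a b → I b a) (z : (traceCon I).Quotient) :
    ∑ s ∈ (Finset.univ.filter fun s : Finset α => ∀ i ∈ s, ∀ j ∈ s, i ≠ j → I i j).filter
      (cliqueProd I · ∣ z), (-1 : R) ^ s.card = if z = 1 then 1 else 0 := by
  have hsum := congrArg (Int.cast : ℤ → R)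
    (Finset.sum_powerset_neg_one_pow_card (x := Finset.univ.filter (letter I · ∣ z)))
  push_cast at hsum
  rw [filter_cliques_cliqueProd_dvd hsym, hsum]
  exact if_congr (filter_letter_dvd_eq_empty_iff hsym z) rfl rfl

end Cliques

section MobiusInversion

variable {M R : Type*} [Monoid M] [IsLeftCancelMul M] [CommSemiring R] [TopologicalSpace R]
  [IsTopologicalSemiring R]

theorem HasSum.indicator_dvd {f : M →* R} {S : R} (hS : HasSum f S) (g : M) :
    HasSum ({z | g ∣ z}.indicator f) (f g * S) := by
  refine ((mul_right_injective g).hasSum_iff fun z hz =>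
    Set.indicator_of_notMem (s := {z | g ∣ z}) (fun ⟨x, hx⟩ => hz ⟨x, hx.symm⟩) f).mp ?_
  have hcomp : {z | g ∣ z}.indicator f ∘ (g * ·) = fun x => f g * f x := by
    funext x
    simp
  simpa only [hcomp] using hS.mul_left (f g)

open Classical in
theorem HasSum.mul_sum_eq_one_of_sum_dvd [T2Space R] {ι : Type*} {f : M →* R} {S : R}
    (hS : HasSum f S) (C : Finset ι) (c : ι → M) (μ : ι → R)
    (h_one : ∑ i ∈ C with c i ∣ 1, μ i = 1)
    (h_ne_one : ∀ z ≠ 1, ∑ i ∈ C with c i ∣ z, μ i = 0) :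
    S * ∑ i ∈ C, μ i * f (c i) = 1 := by
  have hsum_indicator (z : M) :
      ∑ i ∈ C, μ i * {z | c i ∣ z}.indicator f z = (∑ i ∈ C with c i ∣ z, μ i) * f z := by
    simp only [Finset.sum_filter, Finset.sum_mul, Set.indicator_apply, Set.mem_ofPred_eq,
      mul_ite, mul_zero, ite_mul, zero_mul]
  have hsum : HasSum (fun z => ∑ i ∈ C, μ i * {z | c i ∣ z}.indicator f z)
      (∑ i ∈ C, μ i * (f (c i) * S)) :=
    hasSum_sum fun i _ => (hS.indicator_dvd (c i)).mul_left (μ i)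
  have hdelta : HasSum (fun z => ∑ i ∈ C, μ i * {z | c i ∣ z}.indicator f z) 1 := by
    convert hasSum_single (f := fun z => ∑ i ∈ C, μ i * {z | c i ∣ z}.indicator f z) 1
      fun z hz => by rw [hsum_indicator, h_ne_one z hz, zero_mul]
    rw [hsum_indicator, h_one, map_one, one_mul]
  calc S * ∑ i ∈ C, μ i * f (c i) = ∑ i ∈ C, μ i * (f (c i) * S) := by
        rw [Finset.mul_sum]
        exact Finset.sum_congr rfl fun i _ => by ring
    _ = 1 := hsum.unique hdelta

end MobiusInversion

theorem mobius_inversion_reals_general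
    {α : Type*} [Fintype α] [DecidableEq α]
    (I : α → α → Prop) [DecidableRel I]
    (hsym : ∀ a b, I a b → I b a)
    (f : (traceCon I).Quotient →* ℝ) (hpos : ∀ x, 0 < f x)
    (S : ℝ) (hS : HasSum (fun x : (traceCon I).Quotient => f x) S) :
    S * (∑ s ∈ Finset.univ.filter (fun s : Finset α =>
          ∀ i ∈ s, ∀ j ∈ s, i ≠ j → I i j),
        (-1 : ℝ) ^ s.card * ∏ a ∈ s, f ((traceCon I).mk' (of a))) = 1 ∧
    0 < ∑ s ∈ Finset.univ.filter (fun s : Finset α =>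
          ∀ i ∈ s, ∀ j ∈ s, i ≠ j → I i j),
        (-1 : ℝ) ^ s.card * ∏ a ∈ s, f ((traceCon I).mk' (of a)) := by
  have := isLeftCancelMul_traceCon hsym
  have hcount := sum_neg_one_pow_card_cliques_cliqueProd_dvd (R := ℝ) hsym
  have hinv := hS.mul_sum_eq_one_of_sum_dvd _ (cliqueProd I) (fun s => (-1 : ℝ) ^ s.card)
    (by simpa using hcount 1) fun z hz => by simpa [hz] using hcount z
  simp only [map_cliqueProd] at hinv
  have hS_pos : 0 < S := one_pos.trans_le (map_one f ▸ le_hasSum hS 1 fun x _ => (hpos x).le)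
  exact ⟨hinv, pos_of_mul_pos_right (by rw [hinv]; exact one_pos) hS_pos.le⟩

/-- Möbius inversion in the reals: let `f` be a valuation (a
monoid morphism to the positive reals) on a trace monoid `M(Σ,I)`, and let
`h(e) = Σ_{c∈C} (-1)^{|c|} f(c)` be its Möbius transform at the empty clique.
If `Σ_{x∈M} f(x)` converges with sum `S`, then `S·h(e) = 1`; in particular
`h(e) > 0`. -/
theorem mobius_inversion_reals
    {α : Type*} [Fintype α] [DecidableEq α]
    (I : α → α → Prop) [DecidableRel I]
    (hirr : ∀ a, ¬ I a a) (hsym : ∀ a b, I a b → I b a)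
    (f : (traceCon I).Quotient →* ℝ) (hpos : ∀ x, 0 < f x)
    (S : ℝ) (hS : HasSum (fun x : (traceCon I).Quotient => f x) S) :
    S * (∑ s ∈ Finset.univ.filter (fun s : Finset α =>
          ∀ i ∈ s, ∀ j ∈ s, i ≠ j → I i j),
        (-1 : ℝ) ^ s.card * ∏ a ∈ s, f ((traceCon I).mk' (of a))) = 1 ∧
    0 < ∑ s ∈ Finset.univ.filter (fun s : Finset α =>
          ∀ i ∈ s, ∀ j ∈ s, i ≠ j → I i j),
        (-1 : ℝ) ^ s.card * ∏ a ∈ s, f ((traceCon I).mk' (of a)) :=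
  mobius_inversion_reals_general I hsym f hpos S hS
end

section
/- Let M be an irreducible trace monoid on generator set Σ, a ∈ Σ, Σ' = Σ \ {a}, M' the submonoid generated by Σ', and f': M' → ℝ_{>0} a sub-Möbius valuation. Then there exists exactly one value t > 0 such that the valuation f_t on M defined by f_t(a) = t and f_t(b) = f'(b) for b ∈ Σ' is a Möbius valuation; moreover t = h'(e)/K where h'(e) is the Möbius transform of f' at the empty clique and K = 1 - Σ_{δ∈C', δ≠e, a∥δ} (-1)^{|δ|+1} f'(δ), with K ∈ (0,1]. -/
open Finset

variable {α : Type*}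

/-- The cliques of `(α, I)` contained in a set `T` of letters: finsets of
pairwise independent letters of `T`. -/
def cliquesIn [DecidableEq α] (I : α → α → Prop) [DecidableRel I]
    (T : Finset α) : Finset (Finset α) :=
  T.powerset.filter (fun s => ∀ i ∈ s, ∀ j ∈ s, i ≠ j → I i j)

/-- Evaluation of the multivariate Möbius polynomial of the trace monoid
generated by the letters of `T`, at the weights `w`. -/
def mobiusOver [DecidableEq α] [Fintype α] (I : α → α → Prop) [DecidableRel I]
    (T : Finset α) (w : α → ℝ) : ℝ :=
  ∑ s ∈ cliquesIn I T, (-1 : ℝ) ^ s.card * ∏ b ∈ s, w b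

/-- The set of letters parallel to a clique `δ`: letters not in `δ` and
independent of every letter of `δ`; they generate the submonoid `M^{(δ)}`. -/
def parSet [DecidableEq α] [Fintype α] (I : α → α → Prop) [DecidableRel I]
    (δ : Finset α) : Finset α :=
  Finset.univ.filter (fun b => b ∉ δ ∧ ∀ c ∈ δ, I b c)

/-- A weight function `w` on the generators is a Möbius valuation iff
`μ_M(w) = 0` and `μ_{M^{(δ)}}(w) > 0` for every nonempty clique `δ`. -/
def IsMobiusWeights [DecidableEq α] [Fintype α] (I : α → α → Prop)
    [DecidableRel I] (w : α → ℝ) : Prop :=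
  (∀ b, 0 < w b) ∧ mobiusOver I Finset.univ w = 0 ∧
    ∀ δ ∈ cliquesIn I Finset.univ, δ ≠ ∅ → 0 < mobiusOver I (parSet I δ) w

section Aux

set_option linter.unusedSectionVars false
variable [DecidableEq α] [Fintype α] (I : α → α → Prop) [DecidableRel I]

lemma mem_cliquesIn {T s : Finset α} :
    s ∈ cliquesIn I T ↔ s ⊆ T ∧ ∀ i ∈ s, ∀ j ∈ s, i ≠ j → I i j := by
  simp [cliquesIn, mem_filter, mem_powerset]

lemma clique_subset {T s s' : Finset α} (hs : s ∈ cliquesIn I T) (h : s' ⊆ s) :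
    s' ∈ cliquesIn I T := by
  rw [mem_cliquesIn] at hs ⊢
  exact ⟨h.trans hs.1, fun i hi j hj hij => hs.2 i (h hi) j (h hj) hij⟩

lemma empty_mem_cliquesIn {T : Finset α} : ∅ ∈ cliquesIn I T := by
  simp [mem_cliquesIn]

lemma singleton_mem_cliquesIn {c : α} : {c} ∈ cliquesIn I Finset.univ := by
  simp [mem_cliquesIn]

lemma mobiusOver_congr {T : Finset α} {v v' : α → ℝ} (h : ∀ b ∈ T, v b = v' b) :
    mobiusOver I T v = mobiusOver I T v' := by
  unfold mobiusOver
  refine sum_congr rfl fun s hs => ?_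
  congr 1
  exact prod_congr rfl fun b hb => h b ((mem_cliquesIn I).mp hs |>.1 hb)

lemma neg_one_pow_powerset_sum (x : Finset α) :
    ∑ m ∈ x.powerset, (-1 : ℝ) ^ m.card = if x = ∅ then 1 else 0 := by
  have h := Finset.sum_powerset_neg_one_pow_card (x := x)
  have h2 : ((∑ m ∈ x.powerset, (-1 : ℤ) ^ m.card : ℤ) : ℝ)
      = ∑ m ∈ x.powerset, (-1 : ℝ) ^ m.card := by push_cast; rfl
  rw [← h2, h]
  split_ifs <;> simp

lemma neg_one_pow_powerset_sdiff_sum (x : Finset α) :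
    ∑ m ∈ x.powerset, (-1 : ℝ) ^ (x \ m).card = if x = ∅ then 1 else 0 := by
  have key : ∀ m ∈ x.powerset, (-1 : ℝ) ^ (x \ m).card = (-1) ^ x.card * (-1) ^ m.card := by
    intro m hm
    have hc : (x \ m).card + m.card = x.card :=
      Finset.card_sdiff_add_card_eq_card (mem_powerset.mp hm)
    have h1 : (-1 : ℝ) ^ m.card * (-1 : ℝ) ^ m.card = 1 := by
      rw [← pow_add]
      exact Even.neg_one_pow ⟨m.card, by ring⟩
    calc (-1 : ℝ) ^ (x \ m).card
        = (-1 : ℝ) ^ (x \ m).card * ((-1 : ℝ) ^ m.card * (-1 : ℝ) ^ m.card) := by rw [h1, mul_one]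
      _ = ((-1 : ℝ) ^ ((x \ m).card + m.card)) * (-1 : ℝ) ^ m.card := by rw [pow_add]; ring
      _ = (-1 : ℝ) ^ x.card * (-1 : ℝ) ^ m.card := by rw [hc]
  rw [sum_congr rfl key, ← mul_sum, neg_one_pow_powerset_sum]
  split_ifs with hx
  · subst hx; simp
  · simp

lemma mobiusOver_rec (hsym : ∀ b c, I b c → I c b) (v : α → ℝ) {T : Finset α} {x : α}
    (hx : x ∈ T) :
    mobiusOver I T v = mobiusOver I (T.erase x) v
      - v x * mobiusOver I ((T.erase x).filter (fun c => I x c)) v := by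
  unfold mobiusOver
  rw [← Finset.sum_filter_add_sum_filter_not (cliquesIn I T) (fun s => x ∈ s)]
  have h1 : (cliquesIn I T).filter (fun s => x ∉ s) = cliquesIn I (T.erase x) := by
    ext s
    simp only [mem_filter, mem_cliquesIn, subset_erase]
    tauto
  have h2 : (cliquesIn I T).filter (fun s => x ∈ s)
      = (cliquesIn I ((T.erase x).filter (fun c => I x c))).image (insert x) := by
    ext s
    simp only [mem_filter, mem_cliquesIn, mem_image]
    constructor
    · rintro ⟨⟨hsT, hcl⟩, hxs⟩
      refine ⟨s.erase x, ⟨fun c hc => ?_, fun i hi j hj hij =>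
        hcl i ((erase_subset _ _) hi) j ((erase_subset _ _) hj) hij⟩, insert_erase hxs⟩
      rw [mem_filter, mem_erase]
      have hcx := (mem_erase.mp hc).1
      exact ⟨⟨hcx, hsT (mem_of_mem_erase hc)⟩,
        hcl x hxs c (mem_of_mem_erase hc) (Ne.symm hcx)⟩
    · rintro ⟨s', ⟨hs'T, hcl⟩, rfl⟩
      have hxs' : x ∉ s' := fun hxx => (mem_erase.mp (mem_filter.mp (hs'T hxx)).1).1 rfl
      refine ⟨⟨?_, ?_⟩, mem_insert_self _ _⟩
      · intro c hc
        rcases mem_insert.mp hc with rfl | hc'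
        · exact hx
        · exact mem_of_mem_erase (mem_filter.mp (hs'T hc')).1
      · intro i hi j hj hij
        rcases mem_insert.mp hi with rfl | hi' <;> rcases mem_insert.mp hj with rfl | hj'
        · exact absurd rfl hij
        · exact (mem_filter.mp (hs'T hj')).2
        · exact hsym _ _ (mem_filter.mp (hs'T hi')).2
        · exact hcl i hi' j hj' hij
  rw [h1, h2, Finset.sum_image, add_comm]
  · have : ∀ s' ∈ cliquesIn I ((T.erase x).filter (fun c => I x c)),
        (-1 : ℝ) ^ (insert x s').card * ∏ b ∈ insert x s', v b
        = -(v x * ((-1 : ℝ) ^ s'.card * ∏ b ∈ s', v b)) := by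
      intro s' hs'
      have hxs' : x ∉ s' := fun hxx =>
        (mem_erase.mp (mem_filter.mp (((mem_cliquesIn I).mp hs').1 hxx)).1).1 rfl
      rw [card_insert_of_notMem hxs', prod_insert hxs', pow_succ]
      ring
    rw [sum_congr rfl this, Finset.sum_neg_distrib, ← Finset.mul_sum]
    ring
  · intro s hs t ht hst
    have hxs : x ∉ s := fun hxx =>
      (mem_erase.mp (mem_filter.mp (((mem_cliquesIn I).mp hs).1 hxx)).1).1 rfl
    have hxt : x ∉ t := fun hxx =>
      (mem_erase.mp (mem_filter.mp (((mem_cliquesIn I).mp ht).1 hxx)).1).1 rfl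
    have := congrArg (Finset.erase · x) hst
    simpa [erase_insert hxs, erase_insert hxt] using this

lemma transform_eq (hsym : ∀ b c, I b c → I c b) (v : α → ℝ) {Ω δ : Finset α}
    (hδ : δ ∈ cliquesIn I Ω) :
    ∑ δ' ∈ (cliquesIn I Ω).filter (fun δ' => δ ⊆ δ'),
      (-1 : ℝ) ^ (δ' \ δ).card * ∏ b ∈ δ', v b
    = (∏ b ∈ δ, v b) * mobiusOver I (parSet I δ ∩ Ω) v := by
  obtain ⟨hδΩ, hδcl⟩ := (mem_cliquesIn I).mp hδ
  rw [mobiusOver, mul_sum]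
  refine Finset.sum_nbij' (fun δ' => δ' \ δ) (fun γ => δ ∪ γ) ?_ ?_ ?_ ?_ ?_
  · intro δ' hδ'
    rw [mem_filter, mem_cliquesIn] at hδ'
    obtain ⟨⟨hδ'Ω, hδ'cl⟩, hsub⟩ := hδ'
    rw [mem_cliquesIn]
    constructor
    · intro c hc
      rw [mem_sdiff] at hc
      rw [mem_inter]
      refine ⟨?_, hδ'Ω hc.1⟩
      rw [parSet, mem_filter]
      exact ⟨mem_univ _, hc.2, fun d hd => hδ'cl c hc.1 d (hsub hd)
        (fun hcd => hc.2 (hcd ▸ hd))⟩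
    · intro i hi j hj hij
      exact hδ'cl i (mem_sdiff.mp hi).1 j (mem_sdiff.mp hj).1 hij
  · intro γ hγ
    rw [mem_cliquesIn] at hγ
    obtain ⟨hγsub, hγcl⟩ := hγ
    have hγpar : ∀ c ∈ γ, c ∉ δ ∧ ∀ d ∈ δ, I c d := by
      intro c hc
      have := (mem_filter.mp (mem_inter.mp (hγsub hc)).1).2
      exact this
    rw [mem_filter, mem_cliquesIn]
    refine ⟨⟨union_subset hδΩ (fun c hc => (mem_inter.mp (hγsub hc)).2), ?_⟩,
      subset_union_left⟩
    intro i hi j hj hij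
    rcases mem_union.mp hi with hi' | hi' <;> rcases mem_union.mp hj with hj' | hj'
    · exact hδcl i hi' j hj' hij
    · exact hsym _ _ ((hγpar j hj').2 i hi')
    · exact (hγpar i hi').2 j hj'
    · exact hγcl i hi' j hj' hij
  · intro δ' hδ'
    rw [mem_filter] at hδ'
    exact union_sdiff_of_subset hδ'.2
  · intro γ hγ
    rw [mem_cliquesIn] at hγ
    have : Disjoint δ γ := by
      rw [disjoint_right]
      intro c hc
      exact (mem_filter.mp (mem_inter.mp (hγ.1 hc)).1).2.1
    show (δ ∪ γ) \ δ = γ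
    rw [union_sdiff_cancel_left this]
  · intro δ' hδ'
    rw [mem_filter] at hδ'
    have hdis : Disjoint δ (δ' \ δ) := disjoint_sdiff
    have : δ' = δ ∪ (δ' \ δ) := (union_sdiff_of_subset hδ'.2).symm
    calc (-1 : ℝ) ^ (δ' \ δ).card * ∏ b ∈ δ', v b
        = (-1 : ℝ) ^ (δ' \ δ).card * ((∏ b ∈ δ, v b) * ∏ b ∈ δ' \ δ, v b) := by
          rw [← prod_union hdis, ← this]
      _ = (∏ b ∈ δ, v b) * ((-1 : ℝ) ^ (δ' \ δ).card * ∏ b ∈ δ' \ δ, v b) := by ring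

lemma prod_eq_sum_transform (hsym : ∀ b c, I b c → I c b) (v : α → ℝ) {Ω γ : Finset α}
    (hγ : γ ∈ cliquesIn I Ω) :
    ∏ b ∈ γ, v b
    = ∑ δ ∈ (cliquesIn I Ω).filter (fun δ => γ ⊆ δ),
        (∏ b ∈ δ, v b) * mobiusOver I (parSet I δ ∩ Ω) v := by
  have step1 : ∀ δ ∈ (cliquesIn I Ω).filter (fun δ => γ ⊆ δ),
      (∏ b ∈ δ, v b) * mobiusOver I (parSet I δ ∩ Ω) v
      = ∑ δ' ∈ (cliquesIn I Ω).filter (fun δ' => δ ⊆ δ'),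
          (-1 : ℝ) ^ (δ' \ δ).card * ∏ b ∈ δ', v b := by
    intro δ hδ
    exact (transform_eq I hsym v (mem_filter.mp hδ).1).symm
  rw [sum_congr rfl step1]
  rw [Finset.sum_comm' (t' := (cliquesIn I Ω).filter (fun δ' => γ ⊆ δ'))
    (s' := fun δ' => (cliquesIn I Ω).filter (fun δ => γ ⊆ δ ∧ δ ⊆ δ'))]
  · have inner : ∀ δ' ∈ (cliquesIn I Ω).filter (fun δ' => γ ⊆ δ'),
        ∑ δ ∈ (cliquesIn I Ω).filter (fun δ => γ ⊆ δ ∧ δ ⊆ δ'),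
          (-1 : ℝ) ^ (δ' \ δ).card * ∏ b ∈ δ', v b
        = (if δ' = γ then 1 else 0) * ∏ b ∈ δ', v b := by
      intro δ' hδ'
      rw [mem_filter] at hδ'
      rw [← sum_mul]
      congr 1
      have hbij : ∑ δ ∈ (cliquesIn I Ω).filter (fun δ => γ ⊆ δ ∧ δ ⊆ δ'),
          (-1 : ℝ) ^ (δ' \ δ).card
          = ∑ m ∈ (δ' \ γ).powerset, (-1 : ℝ) ^ ((δ' \ γ) \ m).card := by
        refine Finset.sum_nbij' (fun δ => δ \ γ) (fun m => γ ∪ m) ?_ ?_ ?_ ?_ ?_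
        · intro δ hδ
          rw [mem_filter] at hδ
          rw [mem_powerset]
          exact sdiff_subset_sdiff hδ.2.2 le_rfl
        · intro m hm
          rw [mem_powerset] at hm
          rw [mem_filter]
          have hsub : γ ∪ m ⊆ δ' := union_subset hδ'.2 (hm.trans sdiff_subset)
          exact ⟨clique_subset I hδ'.1 hsub, subset_union_left, hsub⟩
        · intro δ hδ
          rw [mem_filter] at hδ
          exact union_sdiff_of_subset hδ.2.1
        · intro m hm
          rw [mem_powerset] at hm
          exact union_sdiff_cancel_left (disjoint_right.mpr fun c hc => (mem_sdiff.mp (hm hc)).2)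
        · intro δ hδ
          rw [mem_filter] at hδ
          have hγδ := hδ.2.1
          have hset : δ' \ δ = (δ' \ γ) \ (δ \ γ) := by
            ext c
            simp only [mem_sdiff]
            constructor
            · rintro ⟨hc1, hc2⟩
              exact ⟨⟨hc1, fun hc => hc2 (hγδ hc)⟩, fun hc => hc2 hc.1⟩
            · rintro ⟨⟨hc1, hc2⟩, hc3⟩
              refine ⟨hc1, fun hc => ?_⟩
              by_cases hcγ : c ∈ γ
              · exact hc2 hcγ
              · exact hc3 ⟨hc, hcγ⟩
          show (-1 : ℝ) ^ (δ' \ δ).card = (-1 : ℝ) ^ ((δ' \ γ) \ (δ \ γ)).card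
          rw [hset]
      rw [hbij, neg_one_pow_powerset_sdiff_sum]
      rcases eq_or_ne δ' γ with rfl | hne
      · simp
      · rw [if_neg hne, if_neg]
        intro hempty
        exact hne (subset_antisymm (by rw [← sdiff_eq_empty_iff_subset]; exact hempty) hδ'.2)
    calc ∏ b ∈ γ, v b
        = (if γ = γ then (1 : ℝ) else 0) * ∏ b ∈ γ, v b := by simp
      _ = ∑ x ∈ (cliquesIn I Ω).filter (fun δ' => γ ⊆ δ'),
            (if x = γ then (1 : ℝ) else 0) * ∏ b ∈ x, v b :=
          (Finset.sum_eq_single_of_mem (f := fun x => (if x = γ then (1 : ℝ) else 0) * ∏ b ∈ x, v b) γ (mem_filter.mpr ⟨hγ, le_rfl⟩)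
            (fun x _ hx => by simp [hx])).symm
      _ = _ := (sum_congr rfl inner).symm
  · intro δ δ'
    simp only [mem_filter]
    tauto

lemma mobiusOver_eq_sum_transform (hsym : ∀ b c, I b c → I c b) (v : α → ℝ)
    {Ω T : Finset α} (hT : T ⊆ Ω) :
    mobiusOver I T v
    = ∑ δ ∈ (cliquesIn I Ω).filter (fun δ => δ ∩ T = ∅),
        (∏ b ∈ δ, v b) * mobiusOver I (parSet I δ ∩ Ω) v := by
  have hCT : cliquesIn I T ⊆ cliquesIn I Ω := by
    intro s hs
    rw [mem_cliquesIn] at hs ⊢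
    exact ⟨hs.1.trans hT, hs.2⟩
  have step1 : ∀ s ∈ cliquesIn I T,
      (-1 : ℝ) ^ s.card * ∏ b ∈ s, v b
      = ∑ δ ∈ (cliquesIn I Ω).filter (fun δ => s ⊆ δ),
          (-1 : ℝ) ^ s.card * ((∏ b ∈ δ, v b) * mobiusOver I (parSet I δ ∩ Ω) v) := by
    intro s hs
    rw [← mul_sum, ← prod_eq_sum_transform I hsym v (hCT hs)]
  rw [mobiusOver, sum_congr rfl step1]
  rw [Finset.sum_comm' (t' := cliquesIn I Ω)
    (s' := fun δ => (cliquesIn I T).filter (fun s => s ⊆ δ))]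
  · have inner : ∀ δ ∈ cliquesIn I Ω,
        ∑ s ∈ (cliquesIn I T).filter (fun s => s ⊆ δ),
          (-1 : ℝ) ^ s.card * ((∏ b ∈ δ, v b) * mobiusOver I (parSet I δ ∩ Ω) v)
        = (if δ ∩ T = ∅ then 1 else 0)
            * ((∏ b ∈ δ, v b) * mobiusOver I (parSet I δ ∩ Ω) v) := by
      intro δ hδ
      rw [← sum_mul]
      congr 1
      have hidx : (cliquesIn I T).filter (fun s => s ⊆ δ) = (δ ∩ T).powerset := by
        ext s
        simp only [mem_filter, mem_cliquesIn, mem_powerset, subset_inter_iff]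
        constructor
        · rintro ⟨⟨h1, _⟩, h2⟩
          exact ⟨h2, h1⟩
        · rintro ⟨h1, h2⟩
          exact ⟨⟨h2, fun i hi j hj hij =>
            ((mem_cliquesIn I).mp hδ).2 i (h1 hi) j (h1 hj) hij⟩, h1⟩
      rw [hidx, neg_one_pow_powerset_sum]
    rw [sum_congr rfl inner]
    rw [← Finset.sum_filter_add_sum_filter_not (cliquesIn I Ω) (fun δ => δ ∩ T = ∅)]
    have z2 : ∑ δ ∈ (cliquesIn I Ω).filter (fun δ => ¬ δ ∩ T = ∅),
        (if δ ∩ T = ∅ then (1 : ℝ) else 0)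
          * ((∏ b ∈ δ, v b) * mobiusOver I (parSet I δ ∩ Ω) v) = 0 := by
      refine Finset.sum_eq_zero fun δ hδ => ?_
      rw [if_neg (mem_filter.mp hδ).2, zero_mul]
    rw [z2, add_zero]
    refine Finset.sum_congr rfl fun δ hδ => ?_
    rw [if_pos (mem_filter.mp hδ).2, one_mul]
  · intro s δ
    simp only [mem_filter]
    tauto

lemma parSet_empty : parSet I (∅ : Finset α) = Finset.univ := by
  ext b; simp [parSet]

variable {I}

lemma hv_pos (hirr : ∀ b, ¬ I b b) (a : α) (f' : α → ℝ)
    (hf'pos : ∀ b, b ≠ a → 0 < f' b)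
    (hsubMob0 : 0 < mobiusOver I (Finset.univ.erase a) f')
    (hsubMobPos : ∀ δ ∈ cliquesIn I (Finset.univ.erase a), δ ≠ ∅ →
      0 < mobiusOver I (parSet I δ ∩ Finset.univ.erase a) f') :
    ∀ δ ∈ cliquesIn I (Finset.univ.erase a),
      0 < (∏ b ∈ δ, f' b) * mobiusOver I (parSet I δ ∩ Finset.univ.erase a) f' := by
  intro δ hδ
  have hprod : 0 < ∏ b ∈ δ, f' b := by
    refine Finset.prod_pos fun b hb => hf'pos b ?_
    exact (mem_erase.mp (((mem_cliquesIn I).mp hδ).1 hb)).1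
  rcases eq_or_ne δ ∅ with rfl | hne
  · rw [parSet_empty, univ_inter]
    exact mul_pos hprod hsubMob0
  · exact mul_pos hprod (hsubMobPos δ hδ hne)

lemma Z_pos (hirr : ∀ b, ¬ I b b) (hsym : ∀ b c, I b c → I c b) (a : α) (f' : α → ℝ)
    (hf'pos : ∀ b, b ≠ a → 0 < f' b)
    (hsubMob0 : 0 < mobiusOver I (Finset.univ.erase a) f')
    (hsubMobPos : ∀ δ ∈ cliquesIn I (Finset.univ.erase a), δ ≠ ∅ →
      0 < mobiusOver I (parSet I δ ∩ Finset.univ.erase a) f') :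
    ∀ T : Finset α, T ⊆ Finset.univ.erase a → 0 < mobiusOver I T f' := by
  intro T hT
  rw [mobiusOver_eq_sum_transform I hsym f' hT]
  refine Finset.sum_pos (fun δ hδ => hv_pos hirr a f' hf'pos hsubMob0 hsubMobPos δ
    (mem_filter.mp hδ).1) ⟨∅, ?_⟩
  rw [mem_filter]
  exact ⟨empty_mem_cliquesIn I, by simp⟩

lemma Z_anti (hirr : ∀ b, ¬ I b b) (hsym : ∀ b c, I b c → I c b) (a : α) (f' : α → ℝ)
    (hf'pos : ∀ b, b ≠ a → 0 < f' b)
    (hsubMob0 : 0 < mobiusOver I (Finset.univ.erase a) f')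
    (hsubMobPos : ∀ δ ∈ cliquesIn I (Finset.univ.erase a), δ ≠ ∅ →
      0 < mobiusOver I (parSet I δ ∩ Finset.univ.erase a) f') :
    ∀ T T' : Finset α, T ⊆ T' → T' ⊆ Finset.univ.erase a →
      mobiusOver I T' f' ≤ mobiusOver I T f' := by
  intro T T' hTT' hT'
  rw [mobiusOver_eq_sum_transform I hsym f' hT',
    mobiusOver_eq_sum_transform I hsym f' (hTT'.trans hT')]
  refine Finset.sum_le_sum_of_subset_of_nonneg ?_ ?_
  · intro δ hδ
    rw [mem_filter] at hδ ⊢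
    refine ⟨hδ.1, ?_⟩
    rw [← subset_empty, ← hδ.2]
    exact inter_subset_inter le_rfl hTT'
  · intro δ hδ _
    exact (hv_pos hirr a f' hf'pos hsubMob0 hsubMobPos δ (mem_filter.mp hδ).1).le

section Ineq

variable {a : α} {f' : α → ℝ}
variable (hirr : ∀ b, ¬ I b b) (hsym : ∀ b c, I b c → I c b)
variable (hf'pos : ∀ b, b ≠ a → 0 < f' b)
variable (hsubMob0 : 0 < mobiusOver I (Finset.univ.erase a) f')
variable (hsubMobPos : ∀ δ ∈ cliquesIn I (Finset.univ.erase a), δ ≠ ∅ →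
  0 < mobiusOver I (parSet I δ ∩ Finset.univ.erase a) f')

include hirr hsym hf'pos hsubMob0 hsubMobPos

lemma Rprime :
    ∀ n : ℕ, ∀ B : Finset α, B ⊆ Finset.univ.erase a → B.card ≤ n →
      ∀ N A' : Finset α, A' ⊆ B →
      mobiusOver I (A' ∩ N) f' * mobiusOver I B f'
        ≤ mobiusOver I (B ∩ N) f' * mobiusOver I A' f' := by
  have Zpos := Z_pos hirr hsym a f' hf'pos hsubMob0 hsubMobPos
  have Zanti := Z_anti hirr hsym a f' hf'pos hsubMob0 hsubMobPos
  intro n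
  induction n with
  | zero =>
    intro B hB hcard N A' hA'
    have hBe : B = ∅ := card_eq_zero.mp (Nat.le_zero.mp hcard)
    subst hBe
    rw [subset_empty] at hA'
    subst hA'
    exact le_rfl
  | succ n ih =>
    have hR : ∀ V W : Finset α, ∀ x : α, V ⊆ Finset.univ.erase a → W ⊆ V → x ∈ W →
        V.card ≤ n + 1 →
        mobiusOver I V f' * mobiusOver I (W.erase x) f'
          ≤ mobiusOver I W f' * mobiusOver I (V.erase x) f' := by
      intro V W x hV hWV hxW hcard
      have hxV : x ∈ V := hWV hxW
      have hfx : 0 < f' x := hf'pos x (ne_of_mem_erase (hV hxV))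
      have key := ih (V.erase x) ((erase_subset _ _).trans hV)
        (by rw [card_erase_of_mem hxV]; omega)
        (Finset.univ.filter (fun c => I x c)) (W.erase x) (erase_subset_erase x hWV)
      have hfil : ∀ U : Finset α, U ∩ Finset.univ.filter (fun c => I x c)
          = U.filter (fun c => I x c) := by
        intro U; ext c; simp [mem_inter, mem_filter]
      rw [hfil, hfil] at key
      rw [mobiusOver_rec I hsym f' hxV, mobiusOver_rec I hsym f' hxW]
      have h1 := mul_le_mul_of_nonneg_left key hfx.le
      nlinarith [h1]
    have step1 : ∀ B : Finset α, B ⊆ Finset.univ.erase a → B.card ≤ n + 1 →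
        ∀ N : Finset α, ∀ u ∈ B,
        mobiusOver I ((B.erase u) ∩ N) f' * mobiusOver I B f'
          ≤ mobiusOver I (B ∩ N) f' * mobiusOver I (B.erase u) f' := by
      intro B hB hcard N u hu
      by_cases hun : u ∈ N
      · have hBN : B ∩ N = insert u ((B.erase u) ∩ N) := by
          ext c
          simp only [mem_inter, mem_insert, mem_erase]
          constructor
          · rintro ⟨hcB, hcN⟩
            rcases eq_or_ne c u with rfl | hne
            · exact Or.inl rfl
            · exact Or.inr ⟨⟨hne, hcB⟩, hcN⟩
          · rintro (rfl | ⟨⟨_, hcB⟩, hcN⟩)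
            · exact ⟨hu, hun⟩
            · exact ⟨hcB, hcN⟩
        have hW : insert u ((B.erase u) ∩ N) ⊆ B :=
          insert_subset hu (inter_subset_left.trans (erase_subset _ _))
        have hres := hR B (insert u ((B.erase u) ∩ N)) u hB hW (mem_insert_self _ _) hcard
        have herase : (insert u ((B.erase u) ∩ N)).erase u = (B.erase u) ∩ N := by
          refine erase_insert ?_
          intro hmem
          exact (mem_erase.mp (mem_inter.mp hmem).1).1 rfl
        rw [herase, ← hBN] at hres
        linarith [hres]
      · have hBN : B ∩ N = (B.erase u) ∩ N := by
          ext c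
          simp only [mem_inter, mem_erase]
          constructor
          · rintro ⟨hcB, hcN⟩
            exact ⟨⟨fun h => hun (h ▸ hcN), hcB⟩, hcN⟩
          · rintro ⟨⟨_, hcB⟩, hcN⟩
            exact ⟨hcB, hcN⟩
        rw [hBN]
        refine mul_le_mul_of_nonneg_left ?_ ?_
        · exact Zanti _ _ (erase_subset _ _) hB
        · exact (Zpos _ (inter_subset_left.trans ((erase_subset _ _).trans hB))).le
    have main : ∀ k : ℕ, ∀ B : Finset α, B ⊆ Finset.univ.erase a → B.card ≤ n + 1 →
        ∀ N A' : Finset α, A' ⊆ B → (B \ A').card ≤ k →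
        mobiusOver I (A' ∩ N) f' * mobiusOver I B f'
          ≤ mobiusOver I (B ∩ N) f' * mobiusOver I A' f' := by
      intro k
      induction k with
      | zero =>
        intro B hB hcard N A' hA' hdiff
        have hemp : B \ A' = ∅ := card_eq_zero.mp (Nat.le_zero.mp hdiff)
        have hBA : B = A' := by
          refine subset_antisymm (fun c hc => ?_) hA'
          by_contra hc'
          exact absurd (mem_sdiff.mpr ⟨hc, hc'⟩) (by rw [hemp]; exact notMem_empty c)
        subst hBA
        exact le_rfl
      | succ k ihk =>
        intro B hB hcard N A' hA' hdiff
        rcases eq_or_ne B A' with heq | hne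
        · subst heq
          exact le_rfl
        · have hex : (B \ A').Nonempty := by
            rw [sdiff_nonempty]
            intro hsub
            exact hne (subset_antisymm hsub hA')
          obtain ⟨u, hu⟩ := hex
          have huB : u ∈ B := (mem_sdiff.mp hu).1
          have huA : u ∉ A' := (mem_sdiff.mp hu).2
          have s1 := step1 B hB hcard N u huB
          have hA'Bu : A' ⊆ B.erase u := fun c hc =>
            mem_erase.mpr ⟨fun h => huA (h ▸ hc), hA' hc⟩
          have hdiff2 : ((B.erase u) \ A').card ≤ k := by
            have hsd : (B.erase u) \ A' = (B \ A').erase u := by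
              ext c; simp only [mem_sdiff, mem_erase]; tauto
            rw [hsd, card_erase_of_mem hu]
            omega
          have s2 := ihk (B.erase u) ((erase_subset _ _).trans hB)
            (le_trans (card_le_card (erase_subset _ _)) hcard) N A' hA'Bu hdiff2
          have p1 : 0 < mobiusOver I (B.erase u) f' := Zpos _ ((erase_subset _ _).trans hB)
          have pB : 0 ≤ mobiusOver I B f' := (Zpos _ hB).le
          have pA : 0 ≤ mobiusOver I A' f' := (Zpos _ (hA'.trans hB)).le
          have m1 := mul_le_mul_of_nonneg_right s2 pB
          have m2 := mul_le_mul_of_nonneg_right s1 pA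
          refine le_of_mul_le_mul_left ?_ p1
          nlinarith [m1, m2]
    intro B hB hcard N A' hA'
    exact main ((B \ A').card) B hB hcard N A' hA' le_rfl

lemma SUPineq (S T : Finset α) (hS : S ⊆ Finset.univ.erase a)
    (hT : T ⊆ Finset.univ.erase a) :
    mobiusOver I (S ∪ T) f' * mobiusOver I (S ∩ T) f'
      ≤ mobiusOver I S f' * mobiusOver I T f' := by
  have h := Rprime hirr hsym hf'pos hsubMob0 hsubMobPos (S ∪ T).card (S ∪ T)
    (union_subset hS hT) le_rfl S T subset_union_right
  rw [inter_comm T S] at h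
  rw [inter_eq_right.mpr (subset_union_left : S ⊆ S ∪ T)] at h
  linarith [h]

lemma main_ineq (S : Finset α) (hS : S ⊆ Finset.univ.erase a) :
    mobiusOver I (Finset.univ.erase a) f'
        * mobiusOver I (S ∩ Finset.univ.filter (fun b => I a b)) f'
      ≤ mobiusOver I S f' * mobiusOver I (Finset.univ.filter (fun b => I a b)) f' := by
  have hA : Finset.univ.filter (fun b => I a b) ⊆ Finset.univ.erase a := by
    intro b hb
    have hIb := (mem_filter.mp hb).2
    refine mem_erase.mpr ⟨?_, mem_univ b⟩
    intro h
    subst h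
    exact hirr _ hIb
  have h1 := SUPineq hirr hsym hf'pos hsubMob0 hsubMobPos S
    (Finset.univ.filter (fun b => I a b)) hS hA
  have h2 : mobiusOver I (Finset.univ.erase a) f'
      ≤ mobiusOver I (S ∪ Finset.univ.filter (fun b => I a b)) f' :=
    Z_anti hirr hsym a f' hf'pos hsubMob0 hsubMobPos _ _ (union_subset hS hA) le_rfl
  have h3 : 0 ≤ mobiusOver I (S ∩ Finset.univ.filter (fun b => I a b)) f' :=
    (Z_pos hirr hsym a f' hf'pos hsubMob0 hsubMobPos _ (inter_subset_left.trans hS)).le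
  nlinarith [mul_le_mul_of_nonneg_right h2 h3]

end Ineq

lemma mobiusOver_empty (v : α → ℝ) : mobiusOver I (∅ : Finset α) v = 1 := by
  have h : cliquesIn I (∅ : Finset α) = {∅} := by
    ext s
    simp [mem_cliquesIn, subset_empty]
    rintro rfl
    simp
  simp [mobiusOver, h]

end Aux

/-- let `M` be an irreducible trace monoid on `Σ`, `a ∈ Σ`,
`Σ' = Σ \ {a}`, `M'` the submonoid generated by `Σ'`, and `f'` a sub-Möbius
valuation on `M'`.  Then there is exactly one `t > 0` making the extension
`f_t` (with `f_t(a) = t`) a Möbius valuation on `M`, namely `t = h'(e)/K`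
where `h'(e)` is the Möbius transform of `f'` at the empty clique and
`K = 1 - Σ_{δ∈C', δ≠e, a∥δ} (-1)^{|δ|+1} f'(δ)`, with `K ∈ (0,1]`. -/
theorem mobius_extension_unique [DecidableEq α] [Fintype α]
    (I : α → α → Prop) [DecidableRel I]
    (hirr : ∀ b, ¬ I b b) (hsym : ∀ b c, I b c → I c b)
    (hconn : ∀ b c : α, Relation.ReflTransGen (fun x y : α => ¬ I x y) b c)
    (a : α) (f' : α → ℝ) (hf'pos : ∀ b, b ≠ a → 0 < f' b)
    (hsubMob0 : 0 < mobiusOver I (Finset.univ.erase a) f')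
    (hsubMobPos : ∀ δ ∈ cliquesIn I (Finset.univ.erase a), δ ≠ ∅ →
      0 < mobiusOver I (parSet I δ ∩ Finset.univ.erase a) f') :
    let K : ℝ := 1 - ∑ δ ∈ (cliquesIn I (Finset.univ.erase a)).filter
        (fun δ => δ ≠ ∅ ∧ a ∉ δ ∧ ∀ c ∈ δ, I a c),
      (-1 : ℝ) ^ (δ.card + 1) * ∏ b ∈ δ, f' b
    (0 < K ∧ K ≤ 1) ∧
      ∀ t : ℝ, (0 < t ∧ IsMobiusWeights I (Function.update f' a t)) ↔
        t = mobiusOver I (Finset.univ.erase a) f' / K := by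
  intro K
  have hKdef : K = 1 - ∑ δ ∈ (cliquesIn I (Finset.univ.erase a)).filter
      (fun δ => δ ≠ ∅ ∧ a ∉ δ ∧ ∀ c ∈ δ, I a c),
      (-1 : ℝ) ^ (δ.card + 1) * ∏ b ∈ δ, f' b := rfl
  have hAsub : Finset.univ.filter (fun b => I a b) ⊆ Finset.univ.erase a := by
    intro b hb
    have hIb := (mem_filter.mp hb).2
    refine mem_erase.mpr ⟨?_, mem_univ b⟩
    intro h
    subst h
    exact hirr _ hIb
  -- K = mobiusOver I A f'
  have hK : K = mobiusOver I (Finset.univ.filter (fun b => I a b)) f' := by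
    have hsets : cliquesIn I (Finset.univ.filter (fun b => I a b))
        = insert ∅ ((cliquesIn I (Finset.univ.erase a)).filter
            (fun δ => δ ≠ ∅ ∧ a ∉ δ ∧ ∀ c ∈ δ, I a c)) := by
      ext δ
      simp only [mem_insert, mem_filter, mem_cliquesIn]
      constructor
      · rintro ⟨hsub, hcl⟩
        rcases eq_or_ne δ ∅ with rfl | hne
        · exact Or.inl rfl
        · refine Or.inr ⟨⟨fun c hc => hAsub (hsub hc), hcl⟩, hne, ?_, ?_⟩
          · intro ha
            exact hirr a (mem_filter.mp (hsub ha)).2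
          · intro c hc
            exact (mem_filter.mp (hsub hc)).2
      · rintro (rfl | ⟨⟨hsub, hcl⟩, hne, hna, hcond⟩)
        · exact ⟨empty_subset _, by simp⟩
        · exact ⟨fun c hc => mem_filter.mpr ⟨mem_univ c, hcond c hc⟩, hcl⟩
    have hemp : (∅ : Finset α) ∉ (cliquesIn I (Finset.univ.erase a)).filter
        (fun δ => δ ≠ ∅ ∧ a ∉ δ ∧ ∀ c ∈ δ, I a c) := by
      simp [mem_filter]
    rw [mobiusOver, hsets, sum_insert hemp, hKdef]
    simp only [card_empty, pow_zero, prod_empty, mul_one]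
    have hterm : ∀ δ ∈ (cliquesIn I (Finset.univ.erase a)).filter
        (fun δ => δ ≠ ∅ ∧ a ∉ δ ∧ ∀ c ∈ δ, I a c),
        (-1 : ℝ) ^ (δ.card + 1) * ∏ b ∈ δ, f' b
          = -((-1 : ℝ) ^ δ.card * ∏ b ∈ δ, f' b) := by
      intro δ _
      rw [pow_succ]
      ring
    rw [sum_congr rfl hterm, Finset.sum_neg_distrib]
    ring
  have hA0 : 0 < mobiusOver I (Finset.univ.filter (fun b => I a b)) f' :=
    Z_pos hirr hsym a f' hf'pos hsubMob0 hsubMobPos _ hAsub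
  have hK0 : 0 < K := hK ▸ hA0
  have hK1 : K ≤ 1 := by
    rw [hK, ← mobiusOver_empty (I := I) f']
    exact Z_anti hirr hsym a f' hf'pos hsubMob0 hsubMobPos ∅ _ (empty_subset _) hAsub
  -- update agrees with f' away from a
  have hupd : ∀ (t : ℝ) (b : α), b ∈ Finset.univ.erase a → Function.update f' a t b = f' b :=
    fun t b hb => Function.update_of_ne (mem_erase.mp hb).1 _ _
  -- Möbius polynomial of the full monoid at the extension
  have hMu : ∀ t : ℝ, mobiusOver I Finset.univ (Function.update f' a t)
      = mobiusOver I (Finset.univ.erase a) f'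
        - t * mobiusOver I (Finset.univ.filter (fun b => I a b)) f' := by
    intro t
    rw [mobiusOver_rec I hsym (Function.update f' a t) (mem_univ a)]
    have hset : (Finset.univ.erase a).filter (fun c => I a c)
        = Finset.univ.filter (fun b => I a b) := by
      ext c
      simp only [mem_filter, mem_erase, mem_univ, true_and, and_true]
      constructor
      · rintro ⟨_, h⟩; exact h
      · intro h
        refine ⟨?_, h⟩
        intro hc
        subst hc
        exact hirr _ h
    rw [Function.update_self, hset,
      mobiusOver_congr I (fun b hb => hupd t b hb),
      mobiusOver_congr I (fun b hb => hupd t b (hAsub hb))]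
  refine ⟨⟨hK0, hK1⟩, fun t => ⟨?_, ?_⟩⟩
  · rintro ⟨ht, _, hzero, _⟩
    rw [hMu t] at hzero
    rw [hK, eq_div_iff hA0.ne']
    linarith
  · intro ht
    have ht' : t = mobiusOver I (Finset.univ.erase a) f'
        / mobiusOver I (Finset.univ.filter (fun b => I a b)) f' := by rw [ht, hK]
    have htpos : 0 < t := by
      rw [ht']
      exact div_pos hsubMob0 hA0
    have wpos : ∀ b, 0 < Function.update f' a t b := by
      intro b
      rcases eq_or_ne b a with rfl | hne
      · rw [Function.update_self]; exact htpos
      · rw [Function.update_of_ne hne]; exact hf'pos b hne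
    refine ⟨htpos, wpos, ?_, ?_⟩
    · rw [hMu t, ht']
      field_simp
      ring
    · -- positivity on parallel submonoids
      have stepA : ∀ δ ∈ cliquesIn I Finset.univ,
          0 ≤ mobiusOver I (parSet I δ) (Function.update f' a t) := by
        intro δ hδ
        by_cases hapar : a ∈ parSet I δ
        · rw [mobiusOver_rec I hsym _ hapar]
          have hSsub : (parSet I δ).erase a ⊆ Finset.univ.erase a := by
            intro c hc
            exact mem_erase.mpr ⟨(mem_erase.mp hc).1, mem_univ c⟩
          have hset2 : ((parSet I δ).erase a).filter (fun c => I a c)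
              = (parSet I δ).erase a ∩ Finset.univ.filter (fun b => I a b) := by
            ext c
            simp only [mem_filter, mem_inter, mem_univ, true_and]
          rw [Function.update_self, hset2,
            mobiusOver_congr I (fun b hb => hupd t b (hSsub hb)),
            mobiusOver_congr I (fun b hb => hupd t b (hSsub (mem_inter.mp hb).1))]
          rw [ht', sub_nonneg, div_mul_eq_mul_div, div_le_iff₀ hA0]
          exact main_ineq hirr hsym hf'pos hsubMob0 hsubMobPos _ hSsub
        · have hsub : parSet I δ ⊆ Finset.univ.erase a := fun c hc =>
            mem_erase.mpr ⟨fun h => hapar (h ▸ hc), mem_univ c⟩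
          rw [mobiusOver_congr I (fun b hb => hupd t b (hsub hb))]
          exact (Z_pos hirr hsym a f' hf'pos hsubMob0 hsubMobPos _ hsub).le
      have rep : ∀ T : Finset α, mobiusOver I T (Function.update f' a t)
          = ∑ δ ∈ (cliquesIn I Finset.univ).filter (fun δ => δ ∩ T = ∅),
              (∏ b ∈ δ, Function.update f' a t b)
                * mobiusOver I (parSet I δ) (Function.update f' a t) := by
        intro T
        have h := mobiusOver_eq_sum_transform I hsym (Function.update f' a t)
          (Ω := Finset.univ) (subset_univ T)
        simpa [inter_univ] using h
      have Hnn : ∀ δ ∈ cliquesIn I Finset.univ,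
          0 ≤ (∏ b ∈ δ, Function.update f' a t b)
            * mobiusOver I (parSet I δ) (Function.update f' a t) :=
        fun δ hδ => mul_nonneg (Finset.prod_nonneg fun b _ => (wpos b).le) (stepA δ hδ)
      have zeroprop : ∀ δ' ∈ cliquesIn I Finset.univ,
          mobiusOver I (parSet I δ') (Function.update f' a t) = 0 →
          ∀ δ ∈ cliquesIn I Finset.univ, δ ∩ parSet I δ' = ∅ →
          (∏ b ∈ δ, Function.update f' a t b)
            * mobiusOver I (parSet I δ) (Function.update f' a t) = 0 := by
        intro δ' _ hzero δ hδ hdisj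
        have h0 : ∑ δ ∈ (cliquesIn I Finset.univ).filter (fun δ => δ ∩ parSet I δ' = ∅),
            (∏ b ∈ δ, Function.update f' a t b)
              * mobiusOver I (parSet I δ) (Function.update f' a t) = 0 := by
          rw [← rep (parSet I δ')]
          exact hzero
        have hall := (Finset.sum_eq_zero_iff_of_nonneg
          (fun δ hδm => Hnn δ (mem_filter.mp hδm).1)).mp h0
        exact hall δ (mem_filter.mpr ⟨hδ, hdisj⟩)
      have prop : ∀ c, mobiusOver I (parSet I {c}) (Function.update f' a t) = 0 →
          ∀ d, ¬ I c d →
          mobiusOver I (parSet I {d}) (Function.update f' a t) = 0 := by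
        intro c h0 d hdep
        have hd : ({d} : Finset α) ∩ parSet I {c} = ∅ := by
          rw [singleton_inter_of_notMem]
          intro hmem
          rw [parSet, mem_filter] at hmem
          rcases eq_or_ne d c with rfl | hne
          · exact hmem.2.1 (mem_singleton_self d)
          · exact hdep (hsym d c (hmem.2.2 c (mem_singleton_self c)))
        have hz := zeroprop {c} (singleton_mem_cliquesIn I) h0 {d}
          (singleton_mem_cliquesIn I) hd
        rcases mul_eq_zero.mp hz with h | h
        · exact absurd h (by rw [prod_singleton]; exact (wpos d).ne')
        · exact h
      intro δ₀ hδ₀ hδ₀ne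
      have hge := stepA δ₀ hδ₀
      rcases hge.lt_or_eq with hlt | heq
      · exact hlt
      · exfalso
        obtain ⟨b, hb⟩ := nonempty_iff_ne_empty.mpr hδ₀ne
        have hb0 : mobiusOver I (parSet I {b}) (Function.update f' a t) = 0 := by
          have hdisj : ({b} : Finset α) ∩ parSet I δ₀ = ∅ := by
            rw [singleton_inter_of_notMem]
            intro hmem
            exact (mem_filter.mp hmem).2.1 hb
          have hz := zeroprop δ₀ hδ₀ heq.symm {b} (singleton_mem_cliquesIn I) hdisj
          rcases mul_eq_zero.mp hz with h | h
          · exact absurd h (by rw [prod_singleton]; exact (wpos b).ne')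
          · exact h
        have chain : ∀ c, Relation.ReflTransGen (fun x y : α => ¬ I x y) b c →
            mobiusOver I (parSet I {c}) (Function.update f' a t) = 0 := by
          intro c h
          induction h with
          | refl => exact hb0
          | tail _ hdep ih => exact prop _ ih _ hdep
        have hfin := chain a (hconn b a)
        have hpar_a : parSet I ({a} : Finset α) = Finset.univ.filter (fun b => I a b) := by
          ext c
          simp only [parSet, mem_filter, mem_singleton, mem_univ, true_and]
          constructor
          · rintro ⟨hne, hI⟩
            exact hsym c a (hI a rfl)
          · intro h
            refine ⟨?_, fun e he => ?_⟩
            · intro hc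
              subst hc
              exact hirr _ h
            · have he' : e = a := by simpa using he
              rw [he']
              exact hsym a c h
        rw [hpar_a] at hfin
        rw [mobiusOver_congr I (fun b' hb' => hupd t b' (hAsub hb'))] at hfin
        exact hA0.ne' hfin
end
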